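/- arXiv:2601.00660 — 5 statements merged into one kernel-verified Lean document; each statement's English description precedes it below -/
import Mathlib

section
/- There exists an absolute constant C > 0 such that for every real number x ≥ 10, |∑_{p ≤ √x, p prime} p^{-(1+2/log x)} · (log(x/p²)/log x) − log log x| ≤ C. -/
set_option maxHeartbeats 1000000

open Finset

open ArithmeticFunction

noncomputable def TT (N : ℕ) : ℝ := ∑ k ∈ Icc 1 N, Real.log k

lemma sumIcc_log_eq (N : ℕ) : TT N = ∑ d ∈ Icc 1 N, Λ d * ((N / d : ℕ) : ℝ) := by
  have h1 : TT N = ∑ k ∈ Icc 1 N, ∑ d ∈ k.divisors, Λ d := by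
    exact sum_congr rfl fun k hk => (vonMangoldt_sum).symm
  rw [h1, Finset.sum_comm' (t' := Icc 1 N) (s' := fun d => (Icc 1 N).filter (d ∣ ·))
    (fun k d => by
      simp only [mem_Icc, Nat.mem_divisors, mem_filter]
      constructor
      · rintro ⟨⟨hk1, hk2⟩, hdk, -⟩
        exact ⟨⟨⟨hk1, hk2⟩, hdk⟩, ⟨Nat.pos_of_dvd_of_pos hdk hk1, le_trans (Nat.le_of_dvd hk1 hdk) hk2⟩⟩
      · rintro ⟨⟨⟨hk1, hk2⟩, hdk⟩, -, -⟩
        exact ⟨⟨hk1, hk2⟩, hdk, by omega⟩)]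
  refine sum_congr rfl fun d hd => ?_
  have hIO : Icc 1 N = Ioc 0 N := Finset.Icc_add_one_left_eq_Ioc 0 N
  rw [sum_const, hIO, Nat.Ioc_filter_dvd_card_eq_div, nsmul_eq_mul, mul_comm]

lemma log_succ_sub_le {a : ℝ} (ha : 0 < a) : Real.log (a+1) - Real.log a ≤ 1/a := by
  rw [← Real.log_div (by positivity) (ne_of_gt ha)]
  have := Real.log_le_sub_one_of_pos (x := (a+1)/a) (by positivity)
  have h2 : (a+1)/a - 1 = 1/a := by field_simp; ring
  linarith

lemma le_log_succ_sub {a : ℝ} (ha : 0 < a) : 1/(a+1) ≤ Real.log (a+1) - Real.log a := by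
  have h0 : (0:ℝ) < a + 1 := by linarith
  have := Real.log_le_sub_one_of_pos (x := a/(a+1)) (by positivity)
  have h1 : Real.log (a/(a+1)) = Real.log a - Real.log (a+1) := Real.log_div (ne_of_gt ha) (ne_of_gt h0)
  have h2 : a/(a+1) - 1 = -(1/(a+1)) := by field_simp; ring
  linarith

lemma harmonic_le : ∀ N : ℕ, 1 ≤ N → ∑ k ∈ Icc 1 N, (1:ℝ)/k ≤ 1 + Real.log N := by
  intro N
  induction N with
  | zero => omega
  | succ n ih =>
    intro _
    rcases Nat.eq_zero_or_pos n with rfl | hn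
    · simp
    rw [Finset.sum_Icc_succ_top (by omega)]
    have h1 := ih hn
    have h2 := le_log_succ_sub (a := (n:ℝ)) (by exact_mod_cast hn)
    push_cast
    linarith

lemma TT_lower : ∀ N : ℕ, (N:ℝ) * Real.log N - N ≤ TT N := by
  intro N
  induction N with
  | zero => simp [TT]
  | succ n ih =>
    rcases Nat.eq_zero_or_pos n with rfl | hn
    · simp [TT]
    have hstep : TT (n+1) = TT n + Real.log (n+1) := by
      unfold TT; rw [Finset.sum_Icc_succ_top (by omega)]; push_cast; ring_nf
    have ha : (0:ℝ) < n := by exact_mod_cast hn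
    have h2 := log_succ_sub_le ha
    -- (n+1)log(n+1) - n log n ≤ log(n+1) + 1
    have key : ((n:ℝ)+1) * Real.log ((n:ℝ)+1) - n * Real.log n ≤ Real.log ((n:ℝ)+1) + 1 := by
      have : (n:ℝ) * (Real.log ((n:ℝ)+1) - Real.log n) ≤ 1 := by
        calc (n:ℝ) * (Real.log ((n:ℝ)+1) - Real.log n) ≤ n * (1/n) := by
              apply mul_le_mul_of_nonneg_left h2 (le_of_lt ha)
          _ = 1 := by field_simp
      nlinarith [Real.log_nonneg (by linarith : (1:ℝ) ≤ (n:ℝ)+1)]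
    push_cast
    push_cast at ih
    linarith [hstep]

lemma TT_upper : ∀ N : ℕ, 1 ≤ N → TT N ≤ (N:ℝ) * Real.log N - N + 2 + Real.log N := by
  have main : ∀ N : ℕ, 1 ≤ N → TT N ≤ (N:ℝ) * Real.log N - N + 1 + ∑ k ∈ Icc 1 N, (1:ℝ)/k := by
    intro N
    induction N with
    | zero => omega
    | succ n ih =>
      intro _
      rcases Nat.eq_zero_or_pos n with rfl | hn
      · simp [TT]
      have hstep : TT (n+1) = TT n + Real.log (n+1) := by
        unfold TT; rw [Finset.sum_Icc_succ_top (by omega)]; push_cast; ring_nf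
      have ha : (0:ℝ) < n := by exact_mod_cast hn
      have h2 := le_log_succ_sub ha
      have hH : ∑ k ∈ Icc 1 (n+1), (1:ℝ)/k = (∑ k ∈ Icc 1 n, (1:ℝ)/k) + 1/((n:ℝ)+1) := by
        rw [Finset.sum_Icc_succ_top (by omega)]; push_cast; ring_nf
      have key : ((n:ℝ)+1) * Real.log ((n:ℝ)+1) - n * Real.log n ≥ Real.log ((n:ℝ)+1) + 1 - 1/((n:ℝ)+1) := by
        have h3 : (n:ℝ) * (Real.log ((n:ℝ)+1) - Real.log n) ≥ n * (1/((n:ℝ)+1)) :=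
          mul_le_mul_of_nonneg_left h2 (le_of_lt ha)
        have h4 : (n:ℝ) * (1/((n:ℝ)+1)) = 1 - 1/((n:ℝ)+1) := by field_simp; ring
        nlinarith
      have ihn := ih hn
      push_cast
      push_cast at ihn
      linarith [hstep]
  intro N hN
  have h1 := main N hN
  have h2 := harmonic_le N hN
  linarith

noncomputable def psi (N : ℕ) : ℝ := ∑ d ∈ Icc 1 N, Λ d

lemma psi_sub_le (N : ℕ) : psi N - psi (N/2) ≤ TT N - 2 * TT (N/2) := by
  have hM : N / 2 ≤ N := Nat.div_le_self N 2
  -- express TT (N/2) as a sum over Icc 1 N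
  have hTTM : TT (N/2) = ∑ d ∈ Icc 1 N, Λ d * (((N/2) / d : ℕ) : ℝ) := by
    rw [sumIcc_log_eq]
    apply Finset.sum_subset (Finset.Icc_subset_Icc_right hM)
    intro d hd hnd
    simp only [mem_Icc] at hd hnd
    have : N / 2 / d = 0 := Nat.div_eq_of_lt (by omega)
    simp [this]
  have hpsiM : psi (N/2) = ∑ d ∈ Icc 1 N, (if d ≤ N/2 then Λ d else 0) := by
    unfold psi
    rw [← Finset.sum_filter]
    apply Finset.sum_congr _ (fun _ _ => rfl)
    ext d; simp only [mem_filter, mem_Icc]; omega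
  rw [hTTM, sumIcc_log_eq, hpsiM, show psi N = ∑ d ∈ Icc 1 N, Λ d from rfl, two_mul, ← Finset.sum_add_distrib, ← Finset.sum_sub_distrib,
    ← Finset.sum_sub_distrib]
  apply Finset.sum_le_sum
  intro d hd
  simp only [mem_Icc] at hd
  have hd1 : 1 ≤ d := hd.1
  have hdvd : N / 2 / d = N / d / 2 := by
    rw [Nat.div_div_eq_div_mul, Nat.div_div_eq_div_mul, mul_comm]
  have hLnn : (0:ℝ) ≤ Λ d := vonMangoldt_nonneg
  by_cases hc : d ≤ N/2
  · simp only [if_pos hc]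
    have hcast : (2:ℝ) * ((N/2/d : ℕ):ℝ) ≤ ((N/d : ℕ):ℝ) := by
      have : 2 * (N/2/d) ≤ N/d := by rw [hdvd]; omega
      exact_mod_cast this
    nlinarith
  · simp only [if_neg hc]
    have h0 : N/2/d = 0 := Nat.div_eq_of_lt (by omega)
    rw [h0]
    have h1 : 1 ≤ N / d := Nat.one_le_div_iff (by omega) |>.mpr hd.2
    have : (1:ℝ) ≤ ((N/d : ℕ):ℝ) := by exact_mod_cast h1
    nlinarith

lemma TT_halving (N : ℕ) (h : 2 ≤ N) :
    TT N - 2 * TT (N/2) ≤ N * Real.log 2 + 2 * Real.log N + 3 := by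
  set M := N / 2 with hMdef
  have hM1 : 1 ≤ M := by omega
  have h2M : N - 1 ≤ 2 * M ∧ 2 * M ≤ N := by omega
  have hup := TT_upper N (by omega)
  have hlo := TT_lower M
  have hMr : ((N:ℝ) - 1)/2 ≤ (M:ℝ) := by
    have : (((N - 1 : ℕ)):ℝ) ≤ 2 * M := by exact_mod_cast h2M.1
    have hN1 : ((N-1:ℕ):ℝ) = (N:ℝ) - 1 := by
      have : (1:ℕ) ≤ N := by omega
      push_cast [this]; ring
    linarith
  have hMr2 : (M:ℝ) ≤ (N:ℝ)/2 := by
    have : ((2*M : ℕ):ℝ) ≤ (N:ℝ) := by exact_mod_cast h2M.2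
    push_cast at this; linarith
  rcases Nat.eq_or_lt_of_le h with rfl | h3
  · -- N = 2
    norm_num [hMdef] at *
    have : TT 2 = Real.log 1 + Real.log 2 := by
      unfold TT; rw [show Finset.Icc 1 2 = {1, 2} by rfl]; norm_num
    have hTT1 : TT 1 = 0 := by unfold TT; simp [TT]
    rw [this, hTT1]
    simp [Real.log_one]
    nlinarith [Real.log_nonneg (by norm_num : (1:ℝ) ≤ 2)]
  · -- N ≥ 3
    have hN3 : (3:ℝ) ≤ N := by exact_mod_cast h3
    -- log M ≥ log((N-1)/2) = log(N-1) - log 2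
    have hlogM : Real.log ((N:ℝ) - 1) - Real.log 2 ≤ Real.log M := by
      rw [← Real.log_div (by linarith) (by norm_num)]
      exact Real.log_le_log (by linarith) hMr
    -- N log N - (N-1) log (N-1) ≤ log N + 1
    have hkey : (N:ℝ) * Real.log N - ((N:ℝ)-1) * Real.log ((N:ℝ)-1) ≤ Real.log N + 1 := by
      have := log_succ_sub_le (a := (N:ℝ)-1) (by linarith)
      have hsub : ((N:ℝ)-1) * (Real.log ((N:ℝ)-1+1) - Real.log ((N:ℝ)-1)) ≤ 1 := by
        calc ((N:ℝ)-1) * (Real.log ((N:ℝ)-1+1) - Real.log ((N:ℝ)-1)) ≤ ((N:ℝ)-1) * (1/((N:ℝ)-1)) := by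
              apply mul_le_mul_of_nonneg_left this (by linarith)
          _ = 1 := by rw [mul_one_div, div_self (by linarith)]
      have : (N:ℝ) - 1 + 1 = N := by ring
      rw [this] at hsub
      nlinarith
    -- assemble
    have hlogN1 : Real.log ((N:ℝ)-1) ≥ 0 := Real.log_nonneg (by linarith)
    have hlog2 : Real.log ((N:ℝ)-1) ≤ Real.log N := Real.log_le_log (by linarith) (by linarith)
    have hMlogM : ((N:ℝ)-1) * (Real.log ((N:ℝ)-1) - Real.log 2) ≤ 2 * ((M:ℝ) * Real.log M) := by
      have hlogMnn : 0 ≤ Real.log M := Real.log_natCast_nonneg M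
      rcases le_or_gt (Real.log ((N:ℝ)-1) - Real.log 2) 0 with hc | hc
      · nlinarith
      · calc ((N:ℝ)-1) * (Real.log ((N:ℝ)-1) - Real.log 2) ≤ (2*(M:ℝ)) * (Real.log ((N:ℝ)-1) - Real.log 2) := by
              nlinarith
          _ ≤ (2*(M:ℝ)) * Real.log M := by nlinarith
          _ = 2 * ((M:ℝ) * Real.log M) := by ring
    have hlog2pos : (0:ℝ) < Real.log 2 := Real.log_pos (by norm_num)
    nlinarith

noncomputable def VV (N : ℕ) : ℝ := ∑ d ∈ Icc 1 N, Λ d / d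

lemma log_le_div_e {a : ℝ} (ha : 0 < a) : Real.log a ≤ a / Real.exp 1 := by
  have h := Real.log_le_sub_one_of_pos (x := a / Real.exp 1) (by positivity)
  rw [Real.log_div (ne_of_gt ha) (by positivity), Real.log_exp] at h
  linarith

lemma psi_le_TT (N : ℕ) : psi N ≤ TT N :=
  Finset.sum_le_sum fun d _ => vonMangoldt_le_log

lemma psi_le_four : ∀ N : ℕ, psi N ≤ 4 * N := by
  intro N
  induction N using Nat.strong_induction_on with
  | _ N ih =>
    rcases Nat.lt_or_ge N 2 with h1 | h1
    · interval_cases N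
      · simp [psi]
      · simp [psi, Finset.Icc_self]
    rcases Nat.lt_or_ge N 6 with h6 | h6
    · -- 2 ≤ N ≤ 5 : use psi ≤ TT ≤ N log N - N + 2 + log N with log N ≤ 2
      have hlogN : Real.log N ≤ 2 := by
        rw [show (2:ℝ) = Real.log (Real.exp 2) by rw [Real.log_exp]]
        apply Real.log_le_log (by positivity)
        have he : (2.7182818283:ℝ) < Real.exp 1 := Real.exp_one_gt_d9
        have : Real.exp 2 = Real.exp 1 * Real.exp 1 := by
          rw [← Real.exp_add]; norm_num
        nlinarith [Real.exp_pos 1, show ((N:ℝ)) ≤ 5 by exact_mod_cast Nat.lt_succ_iff.mp h6]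
      have h2 := psi_le_TT N
      have h3 := TT_upper N (by omega)
      have hN2 : (2:ℝ) ≤ (N:ℝ) := by exact_mod_cast h1
      nlinarith [Real.log_natCast_nonneg N]
    · -- N ≥ 6
      have ihM := ih (N/2) (by omega)
      have h2 := psi_sub_le N
      have h3 := TT_halving N (by omega)
      have hM : ((N/2 : ℕ):ℝ) ≤ (N:ℝ)/2 := by
        have : 2 * (N/2) ≤ N := by omega
        have := (Nat.cast_le (α := ℝ)).mpr this
        push_cast at this; linarith
      have hlog2 : Real.log 2 < 0.6931471808 := Real.log_two_lt_d9
      have hlogN : Real.log N ≤ (N:ℝ) / Real.exp 1 := log_le_div_e (by positivity)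
      have he : (2.7182818283:ℝ) < Real.exp 1 := Real.exp_one_gt_d9
      have hlnn : (0:ℝ) ≤ Real.log N := Real.log_natCast_nonneg N
      have hel : Real.exp 1 * Real.log N ≤ (N:ℝ) := by
        have h5 := mul_le_mul_of_nonneg_left hlogN (Real.exp_pos 1).le
        have h6' : Real.exp 1 * ((N:ℝ)/Real.exp 1) = N := by field_simp
        linarith
      have t2 : 2.7182818283 * Real.log (N:ℝ) ≤ (N:ℝ) := by
        nlinarith
      have t1 : (N:ℝ) * Real.log 2 ≤ 0.6931471808 * N := by
        nlinarith [Nat.cast_nonneg (α := ℝ) N]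
      have hN6 : (6:ℝ) ≤ (N:ℝ) := by exact_mod_cast h6
      linarith

lemma VV_lower (N : ℕ) (h : 1 ≤ N) : Real.log N - 1 ≤ VV N := by
  have h1 : TT N ≤ (N:ℝ) * VV N := by
    rw [sumIcc_log_eq, VV, Finset.mul_sum]
    apply Finset.sum_le_sum
    intro d hd
    simp only [mem_Icc] at hd
    have hd0 : (0:ℝ) < d := by exact_mod_cast hd.1
    have : ((N/d : ℕ):ℝ) ≤ (N:ℝ)/d := Nat.cast_div_le
    calc Λ d * ((N/d : ℕ):ℝ) ≤ Λ d * ((N:ℝ)/d) :=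
          mul_le_mul_of_nonneg_left this vonMangoldt_nonneg
      _ = (N:ℝ) * (Λ d / d) := by ring
  have h2 := TT_lower N
  have hN : (0:ℝ) < N := by exact_mod_cast h
  have : (N:ℝ) * (Real.log N - 1) ≤ (N:ℝ) * VV N := by nlinarith
  exact le_of_mul_le_mul_left this hN

lemma VV_upper (N : ℕ) (h : 1 ≤ N) : VV N ≤ Real.log N + 6 := by
  have h1 : (N:ℝ) * VV N ≤ TT N + psi N := by
    rw [sumIcc_log_eq, VV, Finset.mul_sum, psi, ← Finset.sum_add_distrib]
    apply Finset.sum_le_sum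
    intro d hd
    simp only [mem_Icc] at hd
    have hd0 : (0:ℝ) < d := by exact_mod_cast hd.1
    have hkey : (N:ℝ)/d ≤ ((N/d : ℕ):ℝ) + 1 := by
      have hmod := Nat.div_add_mod N d
      have hlt : N % d < d := Nat.mod_lt N (by omega)
      have : (N:ℝ) = d * ((N/d:ℕ):ℝ) + ((N % d : ℕ):ℝ) := by exact_mod_cast hmod.symm
      rw [div_le_iff₀ hd0]
      have : ((N % d : ℕ):ℝ) < d := by exact_mod_cast hlt
      nlinarith [Nat.cast_nonneg (α := ℝ) (N/d)]
    calc (N:ℝ) * (Λ d / d) = Λ d * ((N:ℝ)/d) := by ring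
      _ ≤ Λ d * (((N/d : ℕ):ℝ) + 1) := mul_le_mul_of_nonneg_left hkey vonMangoldt_nonneg
      _ = Λ d * ((N/d : ℕ):ℝ) + Λ d := by ring
  have h2 := TT_upper N h
  have h3 := psi_le_four N
  have hN : (0:ℝ) < N := by exact_mod_cast h
  have hN1 : (1:ℝ) ≤ N := by exact_mod_cast h
  have hlogN : Real.log N ≤ (N:ℝ) / Real.exp 1 := log_le_div_e (by positivity)
  have he : (2.7182818283:ℝ) < Real.exp 1 := Real.exp_one_gt_d9
  have hlogN' : Real.log N ≤ (N:ℝ) := by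
    apply hlogN.trans
    rw [div_le_iff₀ (by positivity)]
    nlinarith
  -- N * VV N ≤ N log N - N + 2 + log N + 4N ≤ N (log N + 6)
  have : (N:ℝ) * VV N ≤ (N:ℝ) * (Real.log N + 6) := by nlinarith
  exact le_of_mul_le_mul_left this hN

lemma invsqrt_aux (n : ℕ) (hn : 1 ≤ n) :
    1/(((n:ℝ)+1) * Real.sqrt ((n:ℝ)+1)) ≤ 2/Real.sqrt n - 2/Real.sqrt ((n:ℝ)+1) := by
  have hn1 : (1:ℝ) ≤ (n:ℝ) := by exact_mod_cast hn
  set a := Real.sqrt n with hadef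
  set b := Real.sqrt ((n:ℝ)+1) with hbdef
  have ha : 0 < a := Real.sqrt_pos.mpr (by linarith)
  have hb : 0 < b := Real.sqrt_pos.mpr (by linarith)
  have ha2 : a^2 = n := Real.sq_sqrt (by linarith)
  have hb2 : b^2 = (n:ℝ)+1 := Real.sq_sqrt (by linarith)
  have hab : a ≤ b := Real.sqrt_le_sqrt (by linarith)
  have key : a + 2*a*b^2 ≤ 2*b^3 := by
    nlinarith [sq_nonneg (a - b), sq_nonneg (a*b - 1), sq_nonneg (a - 1), mul_pos ha hb,
      sq_nonneg (a*(b-a) - 1), mul_le_mul_of_nonneg_left hab ha.le]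
  rw [div_sub_div _ _ (ne_of_gt ha) (ne_of_gt hb), ← hb2]
  rw [div_le_div_iff₀ (by positivity) (by positivity)]
  nlinarith [mul_pos ha hb, pow_pos hb 3]

lemma invsqrt_sum : ∀ N : ℕ, 1 ≤ N → ∑ m ∈ Icc 2 N, 1/((m:ℝ) * Real.sqrt m) ≤ 2 - 2/Real.sqrt N := by
  intro N
  induction N with
  | zero => omega
  | succ n ih =>
    intro _
    rcases Nat.eq_zero_or_pos n with rfl | hn
    · norm_num [Real.sqrt_one]
    rw [Finset.sum_Icc_succ_top (by omega)]
    have h1 := ih hn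
    have h2 := invsqrt_aux n hn
    push_cast
    push_cast at h1 h2
    linarith

noncomputable def GG (q : ℕ × ℕ) : ℝ := 4 / ((q.1:ℝ) * Real.sqrt q.1)

noncomputable def ff (d : ℕ) : ℕ × ℕ :=
  (d.minFac ^ (d.factorization d.minFac / 2), d.factorization d.minFac % 2)

lemma ff_eq {p k : ℕ} (hp : p.Prime) (hk : 0 < k) : ff (p^k) = (p ^ (k/2), k % 2) := by
  unfold ff
  rw [hp.pow_minFac (by omega), hp.factorization_pow, Finsupp.single_eq_same]

lemma primePowers_sum_le (N : ℕ) (hN : 1 ≤ N) :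
    ∑ d ∈ (Icc 1 N).filter (fun d => ¬ d.Prime), Λ d / d ≤ 16 := by
  classical
  set S' := ((Icc 1 N).filter (fun d => ¬ d.Prime)).filter (fun d => Λ d ≠ 0) with hS'
  have hstep1 : ∑ d ∈ (Icc 1 N).filter (fun d => ¬ d.Prime), Λ d / d = ∑ d ∈ S', Λ d / d := by
    rw [hS']
    refine (Finset.sum_filter_of_ne ?_).symm
    intro d _ hne
    intro h0
    rw [h0] at hne; simp at hne
  -- structural facts about elements of S'
  have hstruct : ∀ d ∈ S', ∃ p k, p.Prime ∧ 2 ≤ k ∧ p ^ k = d := by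
    intro d hd
    rw [hS', Finset.mem_filter, Finset.mem_filter] at hd
    obtain ⟨⟨hd1, hnp⟩, hne⟩ := hd
    obtain ⟨p, k, hp, hk, rfl⟩ := (isPrimePow_nat_iff _).mp (vonMangoldt_ne_zero_iff.mp hne)
    refine ⟨p, k, hp, ?_, rfl⟩
    rcases Nat.lt_or_ge k 2 with h | h
    · exfalso
      have hk1 : k = 1 := by omega
      subst hk1
      rw [pow_one] at hnp
      exact hnp hp
    · exact h
  have hmem : ∀ d ∈ S', ff d ∈ (Icc 2 N) ×ˢ (range 2) := by
    intro d hd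
    obtain ⟨p, k, hp, hk2, rfl⟩ := hstruct d hd
    rw [ff_eq hp (by omega)]
    rw [hS', Finset.mem_filter, Finset.mem_filter, Finset.mem_Icc] at hd
    rw [Finset.mem_product, Finset.mem_Icc, Finset.mem_range]
    have hp2 : 2 ≤ p := hp.two_le
    have h1 : 1 ≤ k/2 := by omega
    have hm2 : 2 ≤ p ^ (k/2) :=
      le_trans hp2 (by calc p = p^1 := (pow_one p).symm
                          _ ≤ p^(k/2) := Nat.pow_le_pow_right (by omega) h1)
    have hmsq : p^(k/2) * p^(k/2) ≤ p^k := by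
      rw [← pow_add]; exact Nat.pow_le_pow_right (by omega) (by omega)
    have hmN : p^(k/2) ≤ N := by
      have := hd.1.1.2
      nlinarith [hm2]
    exact ⟨⟨hm2, hmN⟩, by omega⟩
  have hinj : Set.InjOn ff S' := by
    intro d hd e he hfe
    obtain ⟨p, k, hp, hk2, rfl⟩ := hstruct d hd
    obtain ⟨q, l, hq, hl2, rfl⟩ := hstruct e he
    rw [ff_eq hp (by omega), ff_eq hq (by omega), Prod.mk.injEq] at hfe
    obtain ⟨h1, h2⟩ := hfe
    have hpq : p = q := by
      have e1 : (p ^ (k/2)).minFac = p := hp.pow_minFac (by omega)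
      have e2 : (q ^ (l/2)).minFac = q := hq.pow_minFac (by omega)
      rw [← e1, ← e2, h1]
    subst hpq
    have hkl : k/2 = l/2 := Nat.pow_right_injective hp.two_le h1
    have : k = l := by omega
    rw [this]
  have htermwise : ∀ d ∈ S', Λ d / d ≤ GG (ff d) := by
    intro d hd
    obtain ⟨p, k, hp, hk2, rfl⟩ := hstruct d hd
    rw [ff_eq hp (by omega)]
    set m := p ^ (k/2) with hmdef
    have hp2 : 2 ≤ p := hp.two_le
    have hm2 : 2 ≤ m := le_trans hp2 (by
      calc p = p^1 := (pow_one p).symm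
        _ ≤ p^(k/2) := Nat.pow_le_pow_right (by omega) (by omega))
    have hmsq : m * m ≤ p^k := by
      rw [hmdef, ← pow_add]; exact Nat.pow_le_pow_right (by omega) (by omega)
    have hm2R : (2:ℝ) ≤ (m:ℝ) := by exact_mod_cast hm2
    have hmpos : (0:ℝ) < m := by linarith
    have hdR : ((m:ℝ)) * m ≤ ((p^k : ℕ):ℝ) := by exact_mod_cast hmsq
    have he : Real.exp 1 < 4 := by
      nlinarith [Real.exp_one_lt_d9]
    -- step 1 : Λ d ≤ log d, so Λ d / d ≤ log d / d
    have hd4 : (4:ℝ) ≤ ((p^k:ℕ):ℝ) := by nlinarith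
    have hstep1 : Λ (p^k) / ((p^k:ℕ):ℝ) ≤ Real.log ((p^k:ℕ):ℝ) / ((p^k:ℕ):ℝ) :=
      div_le_div_of_nonneg_right vonMangoldt_le_log (by linarith) |>.trans_eq rfl
    -- step 2 : antitone
    have hstep2 : Real.log ((p^k:ℕ):ℝ) / ((p^k:ℕ):ℝ) ≤ Real.log ((m:ℝ)*m) / ((m:ℝ)*m) := by
      apply Real.log_div_self_antitoneOn
      · simp only [Set.mem_Ici]; nlinarith
      · simp only [Set.mem_Ici]; nlinarith
      · exact hdR
    -- step 3 : log(m²)/m² = 2 log m/m² ≤ 4/(m √m) since log m ≤ 2 √m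
    have hsq : Real.sqrt m ≥ 1 := by
      rw [show (1:ℝ) = Real.sqrt 1 by rw [Real.sqrt_one]]
      exact Real.sqrt_le_sqrt (by linarith)
    have hsqm : Real.sqrt m * Real.sqrt m = m := Real.mul_self_sqrt (by linarith)
    have hlogm : Real.log m ≤ 2 * Real.sqrt m := by
      have h1 : Real.log (Real.sqrt (m:ℝ) * Real.sqrt (m:ℝ)) =
          Real.log (Real.sqrt (m:ℝ)) + Real.log (Real.sqrt (m:ℝ)) :=
        Real.log_mul (by positivity) (by positivity)
      rw [hsqm] at h1
      have h2 : Real.log (Real.sqrt (m:ℝ)) ≤ Real.sqrt (m:ℝ) - 1 :=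
        Real.log_le_sub_one_of_pos (by linarith)
      linarith
    have hstep3 : Real.log ((m:ℝ)*m) / ((m:ℝ)*m) ≤ 4 / ((m:ℝ) * Real.sqrt m) := by
      rw [Real.log_mul (by linarith) (by linarith)]
      rw [div_le_div_iff₀ (by positivity) (by positivity)]
      have hsqpos : 0 < Real.sqrt m := by linarith
      -- (2 log m) * (m √m) ≤ 4 * (m * m) ⟸ log m ≤ 2 √m and √m √m = m
      calc (Real.log m + Real.log m) * ((m:ℝ) * Real.sqrt m)
          ≤ (2 * Real.sqrt m + 2 * Real.sqrt m) * ((m:ℝ) * Real.sqrt m) := by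
            apply mul_le_mul_of_nonneg_right (by linarith) (by positivity)
        _ = 4 * ((m:ℝ) * m) := by
            have : Real.sqrt m * ((m:ℝ) * Real.sqrt m) = (m:ℝ) * m := by
              rw [show Real.sqrt ↑m * ((m:ℝ) * Real.sqrt m) = (Real.sqrt m * Real.sqrt m) * m by ring, hsqm]
            nlinarith [this]
    unfold GG
    simp only
    calc Λ (p^k) / (((p^k:ℕ)):ℝ) ≤ Real.log ((p^k:ℕ):ℝ) / ((p^k:ℕ):ℝ) := hstep1
      _ ≤ Real.log ((m:ℝ)*m) / ((m:ℝ)*m) := hstep2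
      _ ≤ 4 / ((m:ℝ) * Real.sqrt m) := hstep3
  -- assemble
  rw [hstep1]
  calc ∑ d ∈ S', Λ d / d ≤ ∑ d ∈ S', GG (ff d) := Finset.sum_le_sum htermwise
    _ = ∑ q ∈ S'.image ff, GG q := (Finset.sum_image (fun a ha b hb => hinj ha hb)).symm
    _ ≤ ∑ q ∈ (Icc 2 N) ×ˢ (range 2), GG q := by
        apply Finset.sum_le_sum_of_subset_of_nonneg
        · intro q hq
          obtain ⟨d, hd, rfl⟩ := Finset.mem_image.mp hq
          exact hmem d hd
        · intro q _ _
          unfold GG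
          positivity
    _ = ∑ m ∈ Icc 2 N, ∑ j ∈ range 2, GG (m, j) := by
        rw [Finset.sum_product]
    _ = ∑ m ∈ Icc 2 N, 8 / ((m:ℝ) * Real.sqrt m) := by
        apply Finset.sum_congr rfl
        intro m _
        show (∑ _j ∈ range 2, 4 / ((m:ℝ) * Real.sqrt m)) = _
        rw [Finset.sum_const, Finset.card_range]
        ring
    _ = 8 * ∑ m ∈ Icc 2 N, 1 / ((m:ℝ) * Real.sqrt m) := by
        rw [Finset.mul_sum]
        apply Finset.sum_congr rfl
        intro m _; ring
    _ ≤ 8 * (2 - 2/Real.sqrt N) := by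
        have := invsqrt_sum N hN
        linarith
    _ ≤ 16 := by
        have : 0 ≤ 2/Real.sqrt N := by positivity
        linarith

noncomputable def PF (N : ℕ) : ℝ := ∑ p ∈ (Iic N).filter Nat.Prime, Real.log p / p
noncomputable def QF (N : ℕ) : ℝ := ∑ p ∈ (Iic N).filter Nat.Prime, 1 / (p:ℝ)
noncomputable def bb (n : ℕ) : ℝ := 1 / Real.log n
noncomputable def UU (n : ℕ) : ℝ := 1 / ((n:ℝ) * Real.log n)
noncomputable def gg (n : ℕ) : ℝ := - Real.log (Real.log n)

lemma PF_eq (N : ℕ) : PF N = ∑ d ∈ (Icc 1 N).filter Nat.Prime, Λ d / d := by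
  unfold PF
  have hset : (Iic N).filter Nat.Prime = (Icc 1 N).filter Nat.Prime := by
    ext p
    simp only [mem_filter, mem_Iic, mem_Icc]
    exact ⟨fun ⟨h1, h2⟩ => ⟨⟨h2.one_lt.le, h1⟩, h2⟩, fun ⟨h1, h2⟩ => ⟨h1.2, h2⟩⟩
  rw [hset]
  apply Finset.sum_congr rfl
  intro p hp
  rw [mem_filter] at hp
  rw [vonMangoldt_apply_prime hp.2]

lemma PF_bounds (N : ℕ) (h : 1 ≤ N) : Real.log N - 17 ≤ PF N ∧ PF N ≤ Real.log N + 6 := by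
  have hsplit : VV N = PF N + ∑ d ∈ (Icc 1 N).filter (fun d => ¬ d.Prime), Λ d / d := by
    rw [PF_eq, VV]
    exact (Finset.sum_filter_add_sum_filter_not _ _ _).symm
  have h1 := VV_lower N h
  have h2 := VV_upper N h
  have h3 := primePowers_sum_le N h
  have h4 : 0 ≤ ∑ d ∈ (Icc 1 N).filter (fun d => ¬ d.Prime), Λ d / d :=
    Finset.sum_nonneg fun d hd => div_nonneg vonMangoldt_nonneg (Nat.cast_nonneg d)
  constructor <;> linarith

/-- Abel summation identity, with `P 1 = 0`. -/
lemma abel_identity (P b : ℕ → ℝ) (hP1 : P 1 = 0) :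
    ∀ N : ℕ, 2 ≤ N → ∑ n ∈ Icc 2 N, (P n - P (n-1)) * b n
      = P N * b N + ∑ n ∈ Ico 2 N, P n * (b n - b (n+1)) := by
  intro N
  induction N with
  | zero => omega
  | succ n ih =>
    intro hn
    rcases Nat.lt_or_ge n 2 with h2 | h2
    · have : n = 1 := by omega
      subst this
      simp [hP1]
    · have hident := ih h2
      rw [Finset.sum_Icc_succ_top (by omega), hident,
        show Ico 2 (n+1) = insert n (Ico 2 n) by
          rw [Finset.Ico_add_one_right_eq_Icc, Finset.Ico_insert_right (by omega : 2 ≤ n)],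
        Finset.sum_insert (by simp)]
      simp only [Nat.add_sub_cancel]
      push_cast
      ring

lemma perterm {x : ℝ} (hx : 2 ≤ x) :
    |Real.log x * (1/Real.log x - 1/Real.log (x+1))
      - (Real.log (Real.log (x+1)) - Real.log (Real.log x))|
      ≤ 1/(x*Real.log x) - 1/((x+1)*Real.log (x+1)) := by
  have hx0 : (0:ℝ) < x := by linarith
  have hlx : 0 < Real.log x := Real.log_pos (by linarith)
  have hly : 0 < Real.log (x+1) := Real.log_pos (by linarith)
  set lx := Real.log x
  set ly := Real.log (x+1)
  have hlxly : lx ≤ ly := Real.log_le_log hx0 (by linarith)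
  have hsub_le : ly - lx ≤ 1/x := log_succ_sub_le hx0
  have hsub_ge : 1/(x+1) ≤ ly - lx := le_log_succ_sub hx0
  have hsub_le' : x * (ly - lx) ≤ 1 := by
    have := mul_le_mul_of_nonneg_left hsub_le hx0.le
    rwa [mul_one_div, div_self (ne_of_gt hx0)] at this
  have hsub_ge' : 1 ≤ (x+1) * (ly - lx) := by
    have := mul_le_mul_of_nonneg_left hsub_ge (by linarith : (0:ℝ) ≤ x+1)
    rwa [mul_one_div, div_self (by linarith : x+1 ≠ 0)] at this
  have hid : lx * (1/lx - 1/ly) = (ly - lx)/ly := by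
    field_simp
  rw [hid]
  -- four bounds
  have t1 : (ly - lx)/ly ≤ 1/(x*lx) := by
    rw [div_le_div_iff₀ hly (by positivity)]
    nlinarith [mul_le_mul_of_nonneg_right hsub_le' hlx.le]
  have t2 : 1/((x+1)*ly) ≤ (ly - lx)/ly := by
    rw [div_le_div_iff₀ (by positivity) hly]
    nlinarith [mul_le_mul_of_nonneg_right hsub_ge' hly.le]
  have t3 : Real.log ly - Real.log lx ≤ 1/(x*lx) := by
    have h1 : Real.log (ly/lx) ≤ ly/lx - 1 := Real.log_le_sub_one_of_pos (by positivity)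
    rw [Real.log_div (ne_of_gt hly) (ne_of_gt hlx)] at h1
    have h2 : ly/lx - 1 = (ly - lx)/lx := by field_simp
    have h3 : (ly - lx)/lx ≤ 1/(x*lx) := by
      rw [div_le_div_iff₀ hlx (by positivity)]
      nlinarith [mul_le_mul_of_nonneg_right hsub_le' hlx.le]
    linarith
  have t4 : 1/((x+1)*ly) ≤ Real.log ly - Real.log lx := by
    have h1 : Real.log (lx/ly) ≤ lx/ly - 1 := Real.log_le_sub_one_of_pos (by positivity)
    rw [Real.log_div (ne_of_gt hlx) (ne_of_gt hly)] at h1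
    have h2 : lx/ly - 1 = -((ly - lx)/ly) := by field_simp; ring
    have h3 : (ly - lx)/ly ≥ 1/((x+1)*ly) := t2
    linarith
  rw [abs_le]
  constructor <;> nlinarith [t1, t2, t3, t4]

lemma telescope (f : ℕ → ℝ) : ∀ N : ℕ, 2 ≤ N →
    ∑ n ∈ Ico 2 N, (f n - f (n+1)) = f 2 - f N := by
  intro N
  induction N with
  | zero => omega
  | succ n ih =>
    intro hn
    rcases Nat.lt_or_ge n 2 with h2 | h2
    · have : n = 1 := by omega
      subst this
      simp
    · rw [show Ico 2 (n+1) = insert n (Ico 2 n) by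
          rw [Finset.Ico_add_one_right_eq_Icc, Finset.Ico_insert_right (by omega : 2 ≤ n)],
        Finset.sum_insert (by simp), ih h2]
      ring

lemma PF_one : PF 1 = 0 := by
  unfold PF
  have : (Iic 1).filter Nat.Prime = ∅ := by
    ext p
    simp only [mem_filter, mem_Iic, Finset.notMem_empty, iff_false, not_and]
    intro h1 h2
    exact absurd h1 (by have := h2.two_le; omega)
  simp [this]

lemma PF_jump (n : ℕ) (hn : 1 ≤ n) :
    PF (n+1) - PF n = if (n+1).Prime then Real.log (n+1) / (n+1) else 0 := by
  unfold PF
  have hIic : Iic (n+1) = insert (n+1) (Iic n) := by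
    ext m; simp only [mem_Iic, Finset.mem_insert]; omega
  rw [hIic, Finset.filter_insert]
  by_cases hp : (n+1).Prime
  · rw [if_pos hp, if_pos hp, Finset.sum_insert (by simp)]
    push_cast
    ring
  · rw [if_neg hp, if_neg hp]
    ring

lemma QF_eq (N : ℕ) (hN : 2 ≤ N) :
    QF N = ∑ n ∈ Icc 2 N, (PF n - PF (n-1)) * (1 / Real.log n) := by
  have hterm : ∀ n ∈ Icc 2 N, (PF n - PF (n-1)) * (1 / Real.log n)
      = if n.Prime then 1/(n:ℝ) else 0 := by
    intro n hn
    rw [mem_Icc] at hn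
    obtain ⟨m, rfl⟩ : ∃ m, n = m + 1 := ⟨n - 1, by omega⟩
    rw [Nat.add_sub_cancel, PF_jump m (by omega)]
    by_cases hp : (m+1).Prime
    · rw [if_pos hp, if_pos hp]
      have hlog : Real.log ((m:ℝ)+1) ≠ 0 := by
        have : (0:ℝ) < Real.log ((m:ℝ)+1) := Real.log_pos (by
          have : (1:ℝ) ≤ (m:ℝ) := by exact_mod_cast (by omega : 1 ≤ m)
          linarith)
        linarith
      push_cast
      field_simp
    · rw [if_neg hp, if_neg hp, zero_mul]
  rw [Finset.sum_congr rfl hterm, ← Finset.sum_filter]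
  unfold QF
  have hset : (Iic N).filter Nat.Prime = (Icc 2 N).filter Nat.Prime := by
    ext p
    simp only [mem_filter, mem_Iic, mem_Icc]
    exact ⟨fun ⟨h1, h2⟩ => ⟨⟨h2.two_le, h1⟩, h2⟩, fun ⟨h1, h2⟩ => ⟨h1.2, h2⟩⟩
  rw [hset]

lemma perterm_nat (n : ℕ) (hn : 2 ≤ n) :
    |PF n * (bb n - bb (n+1)) - (gg n - gg (n+1))|
      ≤ 17 * (bb n - bb (n+1)) + (UU n - UU (n+1)) := by
  have hn2 : (2:ℝ) ≤ (n:ℝ) := by exact_mod_cast hn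
  have hpt := perterm hn2
  have hPFb := PF_bounds n (by omega)
  have hlxpos : 0 < Real.log (n:ℝ) := Real.log_pos (by linarith)
  have hlypos : 0 < Real.log ((n:ℝ)+1) := Real.log_pos (by linarith)
  have hD : 0 ≤ 1/Real.log (n:ℝ) - 1/Real.log ((n:ℝ)+1) := by
    have h0 : Real.log (n:ℝ) ≤ Real.log ((n:ℝ)+1) := Real.log_le_log (by linarith) (by linarith)
    have h1 : 1/Real.log ((n:ℝ)+1) ≤ 1/Real.log (n:ℝ) := one_div_le_one_div_of_le hlxpos h0
    linarith
  unfold bb UU gg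
  push_cast
  have hrr : |PF n - Real.log n| ≤ 17 := by
    rw [abs_le]; constructor <;> linarith [hPFb.1, hPFb.2]
  rw [abs_le] at hpt hrr ⊢
  have h2 : (PF n - Real.log n) * (1/Real.log (n:ℝ) - 1/Real.log ((n:ℝ)+1))
      ≤ 17 * (1/Real.log (n:ℝ) - 1/Real.log ((n:ℝ)+1)) :=
    mul_le_mul_of_nonneg_right hrr.2 hD
  have h3 : -(17 * (1/Real.log (n:ℝ) - 1/Real.log ((n:ℝ)+1)))
      ≤ (PF n - Real.log n) * (1/Real.log (n:ℝ) - 1/Real.log ((n:ℝ)+1)) := by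
    nlinarith
  constructor <;> nlinarith

lemma mertens2 (N : ℕ) (hN : 2 ≤ N) :
    |QF N - Real.log (Real.log N) - (1 - Real.log (Real.log 2))| ≤ 60 := by
  have hlog2 : (0.6931471803:ℝ) < Real.log 2 := Real.log_two_gt_d9
  have habel := abel_identity PF bb PF_one N hN
  have hQF : QF N = PF N * bb N + ∑ n ∈ Ico 2 N, PF n * (bb n - bb (n+1)) := by
    rw [QF_eq N hN]; exact habel
  have htel_bb := telescope bb N hN
  have htel_UU := telescope UU N hN
  have htel_gg := telescope gg N hN
  -- bound |S - I|
  have hSI : |∑ n ∈ Ico 2 N, PF n * (bb n - bb (n+1)) - ∑ n ∈ Ico 2 N, (gg n - gg (n+1))|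
      ≤ 17 * (bb 2 - bb N) + (UU 2 - UU N) := by
    rw [← Finset.sum_sub_distrib]
    calc |∑ n ∈ Ico 2 N, (PF n * (bb n - bb (n+1)) - (gg n - gg (n+1)))|
        ≤ ∑ n ∈ Ico 2 N, |PF n * (bb n - bb (n+1)) - (gg n - gg (n+1))| :=
          Finset.abs_sum_le_sum_abs _ _
      _ ≤ ∑ n ∈ Ico 2 N, (17 * (bb n - bb (n+1)) + (UU n - UU (n+1))) := by
          apply Finset.sum_le_sum
          intro n hn
          rw [mem_Ico] at hn
          exact perterm_nat n hn.1
      _ = 17 * (bb 2 - bb N) + (UU 2 - UU N) := by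
          rw [Finset.sum_add_distrib, ← Finset.mul_sum, htel_bb, htel_UU]
  -- head term
  have hlogN : Real.log 2 ≤ Real.log (N:ℝ) := by
    apply Real.log_le_log (by norm_num)
    exact_mod_cast hN
  have hlogNpos : 0 < Real.log (N:ℝ) := by linarith
  have hhead : |PF N * bb N - 1| ≤ 17 * bb N := by
    have hb : bb N = 1/Real.log (N:ℝ) := rfl
    have hexp : PF N * bb N - 1 = (PF N - Real.log N) * bb N := by
      rw [hb]
      field_simp
    rw [hexp, abs_mul]
    have hrr : |PF N - Real.log (N:ℝ)| ≤ 17 := by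
      have := PF_bounds N (by omega)
      rw [abs_le]; constructor <;> linarith [this.1, this.2]
    have hbnn : 0 ≤ bb N := by rw [hb]; positivity
    rw [abs_of_nonneg hbnn]
    exact mul_le_mul_of_nonneg_right hrr hbnn
  -- numeric bounds
  have hbb2 : bb 2 ≤ 1.45 := by
    unfold bb
    push_cast
    rw [div_le_iff₀ (by linarith)]
    nlinarith
  have hUU2 : UU 2 ≤ 0.73 := by
    unfold UU
    push_cast
    rw [div_le_iff₀ (by nlinarith)]
    nlinarith
  have hbbN : 0 ≤ bb N := by unfold bb; positivity
  have hbbN' : bb N ≤ bb 2 := by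
    unfold bb
    push_cast
    apply one_div_le_one_div_of_le (by linarith) hlogN
  have hUUN : 0 ≤ UU N := by unfold UU; positivity
  -- assemble
  have hI : ∑ n ∈ Ico 2 N, (gg n - gg (n+1)) = Real.log (Real.log N) - Real.log (Real.log 2) := by
    rw [htel_gg]; unfold gg; push_cast; ring
  rw [abs_le] at hSI hhead ⊢
  rw [hI] at hSI
  constructor <;> nlinarith [hSI.1, hSI.2, hhead.1, hhead.2, hQF]

lemma weight_bounds {t : ℝ} (h0 : 0 ≤ t) (h1 : t ≤ 1/2) :
    1 - 4*t ≤ Real.exp (-(2*t)) * (1 - 2*t) ∧ Real.exp (-(2*t)) * (1 - 2*t) ≤ 1 := by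
  have he : 1 - 2*t ≤ Real.exp (-(2*t)) := by
    have := Real.add_one_le_exp (-(2*t)); linarith
  have hnn : 0 ≤ 1 - 2*t := by linarith
  constructor
  · have h2 : (1-2*t) * (1-2*t) ≤ Real.exp (-(2*t)) * (1-2*t) :=
      mul_le_mul_of_nonneg_right he hnn
    nlinarith
  · have h2 : Real.exp (-(2*t)) * (1-2*t) ≤ Real.exp (-(2*t)) * Real.exp (-(2*t)) :=
      mul_le_mul_of_nonneg_left he (Real.exp_pos _).le
    rw [← Real.exp_add] at h2
    have h3 : Real.exp (-(2*t) + -(2*t)) ≤ 1 := Real.exp_le_one_iff.mpr (by linarith)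
    linarith

/-- There exists an absolute constant `C > 0` such that for every real `x ≥ 10`,
`|∑_{p ≤ √x, p prime} p^{-(1 + 2/log x)} · (log(x/p²)/log x) − log log x| ≤ C`. -/
theorem stmt_3 :
    ∃ C : ℝ, 0 < C ∧ ∀ x : ℝ, 10 ≤ x →
      |(∑ p ∈ (Finset.Iic ⌊Real.sqrt x⌋₊).filter Nat.Prime,
          (p : ℝ) ^ (-(1 + 2 / Real.log x)) * (Real.log (x / (p : ℝ) ^ 2) / Real.log x))
        - Real.log (Real.log x)| ≤ C := by
  refine ⟨100, by norm_num, ?_⟩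
  intro x hx
  set L := Real.log x with hLdef
  set y := ⌊Real.sqrt x⌋₊ with hydef
  have hxpos : (0:ℝ) < x := by linarith
  have hsx : (3:ℝ) ≤ Real.sqrt x := by
    rw [show (3:ℝ) = Real.sqrt 9 by rw [show (9:ℝ) = 3^2 by norm_num, Real.sqrt_sq (by norm_num)]]
    exact Real.sqrt_le_sqrt (by linarith)
  have hy3 : 3 ≤ y := by
    rw [hydef]
    exact Nat.le_floor (by exact_mod_cast hsx)
  have hyle : (y:ℝ) ≤ Real.sqrt x := Nat.floor_le (Real.sqrt_nonneg x)
  have hygt : Real.sqrt x - 1 < (y:ℝ) := Nat.sub_one_lt_floor _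
  have hexp2 : Real.exp 2 < 10 := by
    rw [show (2:ℝ) = 1+1 by norm_num, Real.exp_add]
    nlinarith [Real.exp_one_lt_d9, Real.exp_pos 1]
  have hL2 : 2 ≤ L := by
    rw [hLdef, show (2:ℝ) = Real.log (Real.exp 2) by rw [Real.log_exp]]
    exact Real.log_le_log (Real.exp_pos 2) (by linarith)
  have hLpos : 0 < L := by linarith
  have hlogsqrt : Real.log (Real.sqrt x) = L / 2 := by
    rw [hLdef, Real.log_sqrt hxpos.le]
  -- termwise comparison
  have hterm : ∀ p ∈ (Finset.Iic y).filter Nat.Prime,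
      0 ≤ 1/(p:ℝ) - (p : ℝ) ^ (-(1 + 2 / L)) * (Real.log (x / (p : ℝ) ^ 2) / L) ∧
      1/(p:ℝ) - (p : ℝ) ^ (-(1 + 2 / L)) * (Real.log (x / (p : ℝ) ^ 2) / L)
        ≤ 4 * (Real.log p / L) * (1/(p:ℝ)) := by
    intro p hp
    rw [mem_filter, mem_Iic] at hp
    obtain ⟨hpy, hpp⟩ := hp
    have hp2 : 2 ≤ p := hpp.two_le
    have hppos : (0:ℝ) < p := by exact_mod_cast (by omega : 0 < p)
    have hpR : (2:ℝ) ≤ (p:ℝ) := by exact_mod_cast hp2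
    have hplesx : (p:ℝ) ≤ Real.sqrt x := le_trans (by exact_mod_cast hpy) hyle
    have hlogp_pos : 0 < Real.log p := Real.log_pos (by linarith)
    have hlogp : Real.log p ≤ L / 2 := by
      rw [← hlogsqrt]
      exact Real.log_le_log hppos hplesx
    set t := Real.log p / L with htdef
    have ht0 : 0 ≤ t := by positivity
    have ht1 : t ≤ 1/2 := by
      rw [htdef, div_le_div_iff₀ hLpos (by norm_num)]
      linarith
    have hrpow : (p:ℝ) ^ (-(1 + 2/L)) = (1/(p:ℝ)) * Real.exp (-(2*t)) := by
      rw [Real.rpow_def_of_pos hppos]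
      rw [show Real.log (p:ℝ) * (-(1 + 2/L)) = -Real.log p + -(2*t) by
        rw [htdef]; field_simp; ring]
      rw [Real.exp_add, Real.exp_neg, Real.exp_log hppos]
      ring
    have hw : Real.log (x / (p:ℝ)^2) / L = 1 - 2*t := by
      rw [Real.log_div (ne_of_gt hxpos) (by positivity), Real.log_pow]
      rw [htdef]
      field_simp
      push_cast; rw [hLdef]; ring
    rw [hrpow, hw]
    obtain ⟨hwb1, hwb2⟩ := weight_bounds ht0 ht1
    constructor
    · have : (1/(p:ℝ)) * (Real.exp (-(2*t)) * (1 - 2*t)) ≤ (1/(p:ℝ)) * 1 :=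
        mul_le_mul_of_nonneg_left hwb2 (by positivity)
      nlinarith
    · have : (1/(p:ℝ)) * (1 - 4*t) ≤ (1/(p:ℝ)) * (Real.exp (-(2*t)) * (1 - 2*t)) :=
        mul_le_mul_of_nonneg_left hwb1 (by positivity)
      nlinarith
  -- sum comparison
  have hsum : 0 ≤ QF y - (∑ p ∈ (Finset.Iic y).filter Nat.Prime,
        (p : ℝ) ^ (-(1 + 2 / L)) * (Real.log (x / (p : ℝ) ^ 2) / L)) ∧
      QF y - (∑ p ∈ (Finset.Iic y).filter Nat.Prime,
        (p : ℝ) ^ (-(1 + 2 / L)) * (Real.log (x / (p : ℝ) ^ 2) / L)) ≤ (4/L) * PF y := by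
    unfold QF PF
    rw [← Finset.sum_sub_distrib, Finset.mul_sum]
    constructor
    · apply Finset.sum_nonneg
      intro p hp
      exact (hterm p hp).1
    · apply Finset.sum_le_sum
      intro p hp
      have := (hterm p hp).2
      have heq : (4/L) * (Real.log p / p) = 4 * (Real.log p / L) * (1/(p:ℝ)) := by
        field_simp
      linarith [heq ▸ this]
  -- PF y bound
  have hlogy_ub : Real.log y ≤ L/2 := by
    rw [← hlogsqrt]
    exact Real.log_le_log (by exact_mod_cast (by omega : 0 < y)) hyle
  have hPFy : PF y ≤ L/2 + 6 := by
    have := (PF_bounds y (by omega)).2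
    linarith
  have hsum_bd : QF y - (∑ p ∈ (Finset.Iic y).filter Nat.Prime,
        (p : ℝ) ^ (-(1 + 2 / L)) * (Real.log (x / (p : ℝ) ^ 2) / L)) ≤ 14 := by
    have h1 := hsum.2
    have hPFy_nn : 0 ≤ PF y ∨ True := Or.inr trivial
    have h2 : (4/L) * PF y ≤ (4/L) * (L/2 + 6) := by
      apply mul_le_mul_of_nonneg_left hPFy (by positivity)
    have h3 : (4/L) * (L/2 + 6) = 2 + 24/L := by field_simp; ring
    have h4 : 24/L ≤ 12 := by
      rw [div_le_iff₀ hLpos]; linarith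
    linarith
  -- mertens2 at y
  have hm2 := mertens2 y (by omega)
  have hlog2 : (0.6931471803:ℝ) < Real.log 2 := Real.log_two_gt_d9
  have hlog2ub : Real.log 2 < 0.6931471808 := Real.log_two_lt_d9
  have hloglog2 : 1 - 1/Real.log 2 ≤ Real.log (Real.log 2) ∧ Real.log (Real.log 2) ≤ 0 := by
    constructor
    · have h1 : Real.log (1/Real.log 2) ≤ 1/Real.log 2 - 1 :=
        Real.log_le_sub_one_of_pos (by positivity)
      rw [Real.log_div (by norm_num) (by linarith), Real.log_one] at h1
      linarith
    · apply Real.log_nonpos (by linarith)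
      linarith [Real.log_le_sub_one_of_pos (show (0:ℝ) < 2 by norm_num)]
  have habs2 : |1 - Real.log (Real.log 2)| ≤ 2 := by
    rw [abs_le]
    have : 1/Real.log 2 ≤ 1.45 := by
      rw [div_le_iff₀ (by linarith)]; linarith
    constructor <;> linarith [hloglog2.1, hloglog2.2]
  -- log log y vs log log x
  have hlogy_lb : L/8 ≤ Real.log y := by
    have hy_lb : Real.sqrt x / 2 ≤ (y:ℝ) := by
      have : (2:ℝ) ≤ Real.sqrt x := by linarith
      linarith
    have h1 : Real.log (Real.sqrt x / 2) ≤ Real.log y := by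
      apply Real.log_le_log (by positivity) hy_lb
    rw [Real.log_div (by positivity) (by norm_num), hlogsqrt] at h1
    -- L/2 - log 2 ≥ L/8 ⟺ 3L/8 ≥ log 2
    linarith [h1, hlog2ub, hL2]
  have hloglog : |Real.log (Real.log y) - Real.log L| ≤ 3 := by
    have hly_pos : 0 < Real.log (y:ℝ) := by linarith [hlogy_lb, hL2]
    have hub : Real.log (Real.log y) ≤ Real.log L := Real.log_le_log hly_pos (by linarith)
    have hlb : Real.log L - 3 ≤ Real.log (Real.log y) := by
      have h1 : Real.log (L/8) ≤ Real.log (Real.log y) := Real.log_le_log (by positivity) hlogy_lb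
      rw [Real.log_div (by positivity) (by norm_num)] at h1
      have h8 : Real.log 8 ≤ 3 := by
        rw [show (8:ℝ) = 2^3 by norm_num, Real.log_pow]
        push_cast
        linarith [hlog2ub]
      linarith
    rw [abs_le]
    constructor <;> linarith
  -- assemble
  rw [abs_le] at hm2 hloglog habs2 ⊢
  have h1 := hsum.1
  constructor <;> linarith [hm2.1, hm2.2, hloglog.1, hloglog.2, habs2.1, habs2.2, hsum_bd, h1]
end

section
/- There exists an absolute constant C > 0 such that for every real number x ≥ 10 and every complex number z with 0 ≤ Re(z) and |z| ≤ 1/log x, one has |∑_{p ≤ √x, p prime} p^{-(1+2/log x+2z)} · (log(x/p²)/log x) − log log x| ≤ C. -/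
open Finset

namespace Stmt4


/-- Bernoulli for exponents in `[-1,0]`. -/
lemma bernoulli_neg {s a : ℝ} (hs : -1 < s) (ha : -1 ≤ a) (ha0 : a ≤ 0) :
    1 + a * s ≤ (1 + s) ^ a := by
  have hs0 : (0:ℝ) < 1 + s := by linarith
  have h2 : (1 + s) ^ (-a) ≤ 1 + (-a) * s :=
    rpow_one_add_le_one_add_mul_self hs.le (by linarith) (by linarith)
  have hpos : 0 < 1 + (-a) * s := by
    rcases le_or_gt 0 s with h | h
    · nlinarith
    · nlinarith
  have hrw : (1 + s) ^ a = ((1 + s) ^ (-a))⁻¹ := by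
    rw [← Real.rpow_neg hs0.le, neg_neg]
  rw [hrw]
  calc 1 + a * s ≤ (1 + (-a) * s)⁻¹ := by
        rw [inv_eq_one_div, le_div_iff₀ hpos]
        nlinarith [sq_nonneg (a*s)]
  _ ≤ ((1 + s) ^ (-a))⁻¹ := by
        gcongr

lemma summable_rpow_neg {σ : ℝ} (h1 : 1 < σ) : Summable (fun n : ℕ => (n : ℝ) ^ (-σ)) :=
  Real.summable_nat_rpow.mpr (by linarith)

/-- Lower zeta bound. -/
lemma zeta_lower {σ : ℝ} (h1 : 1 < σ) (h2 : σ ≤ 2) :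
    1 / (σ - 1) ≤ ∑' n : ℕ, (n : ℝ) ^ (-σ) := by
  have hsum : Summable (fun n : ℕ => (n : ℝ) ^ (-σ)) := summable_rpow_neg h1
  have hsum1 : Summable (fun n : ℕ => ((n : ℝ) + 1) ^ (-σ)) := by
    have := (summable_nat_add_iff 1).mpr hsum
    refine this.congr fun n => ?_
    push_cast
    ring_nf
  have key : ∀ N : ℕ, (1 - ((N:ℝ)+1) ^ (1-σ)) / (σ-1) ≤ ∑' n : ℕ, (n : ℝ) ^ (-σ) := by
    intro N
    have hterm : ∀ n : ℕ, ((n:ℝ)+1) ^ (1-σ) - ((n:ℝ)+1+1) ^ (1-σ) ≤ (σ-1) * ((n:ℝ)+1) ^ (-σ) := by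
      intro n
      set t : ℝ := (n:ℝ)+1 with ht
      have ht1 : (1:ℝ) ≤ t := by rw [ht]; linarith [Nat.cast_nonneg (α := ℝ) n]
      have ht0 : (0:ℝ) < t := lt_of_lt_of_le one_pos ht1
      have hb := bernoulli_neg (s := 1/t) (a := 1-σ)
        (lt_trans (by norm_num) (one_div_pos.mpr ht0)) (by linarith) (by linarith)
      have hmul : t ^ (1-σ) * (1 + 1/t) ^ (1-σ) = (t+1) ^ (1-σ) := by
        rw [← Real.mul_rpow ht0.le (by positivity), mul_add, mul_one_div, div_self ht0.ne',
          mul_one]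
      have htpos : (0:ℝ) < t ^ (1-σ) := Real.rpow_pos_of_pos ht0 _
      have h3 : t ^ (1-σ) * (1 + (1-σ) * (1/t)) ≤ (t+1) ^ (1-σ) := by
        calc t ^ (1-σ) * (1 + (1-σ) * (1/t)) ≤ t ^ (1-σ) * (1 + 1/t) ^ (1-σ) :=
              mul_le_mul_of_nonneg_left hb htpos.le
        _ = (t+1) ^ (1-σ) := hmul
      have h4 : t ^ (1-σ) * (1/t) = t ^ (-σ) := by
        rw [one_div, ← Real.rpow_neg_one t, ← Real.rpow_add ht0]
        ring_nf
      nlinarith [h3, h4]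
    calc (1 - ((N:ℝ)+1) ^ (1-σ)) / (σ-1)
        = (∑ n ∈ Finset.range N, (((n:ℝ)+1) ^ (1-σ) - ((n:ℝ)+1+1) ^ (1-σ))) / (σ-1) := by
          congr 1
          have := Finset.sum_range_sub' (f := fun n : ℕ => ((n:ℝ)+1) ^ (1-σ)) N
          push_cast at this
          rw [this]
          norm_num
      _ ≤ (∑ n ∈ Finset.range N, (σ-1) * ((n:ℝ)+1) ^ (-σ)) / (σ-1) := by
          apply div_le_div_of_nonneg_right ?_ (by linarith)
          exact Finset.sum_le_sum fun n _ => hterm n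
      _ = ∑ n ∈ Finset.range N, ((n:ℝ)+1) ^ (-σ) := by
          rw [← Finset.mul_sum, mul_div_cancel_left₀ _ (by linarith : σ - 1 ≠ 0)]
      _ ≤ ∑' n : ℕ, ((n:ℝ)+1) ^ (-σ) :=
          Summable.sum_le_tsum _ (fun n _ => Real.rpow_nonneg (by positivity) _) hsum1
      _ = ∑' n : ℕ, (n : ℝ) ^ (-σ) := by
          rw [Summable.tsum_eq_zero_add hsum]
          rw [Nat.cast_zero, Real.zero_rpow (by linarith : -σ ≠ 0), zero_add]
          exact tsum_congr fun n => by push_cast; ring_nf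
  have hlim : Filter.Tendsto (fun N : ℕ => (1 - ((N:ℝ)+1) ^ (1-σ)) / (σ-1)) Filter.atTop
      (nhds (1 / (σ-1))) := by
    have h0 : Filter.Tendsto (fun N : ℕ => ((N:ℝ)+1)) Filter.atTop Filter.atTop :=
      Filter.tendsto_atTop_add_const_right _ 1 tendsto_natCast_atTop_atTop
    have h1' : Filter.Tendsto (fun N : ℕ => ((N:ℝ)+1) ^ (1-σ)) Filter.atTop (nhds 0) := by
      have := (tendsto_rpow_neg_atTop (y := σ - 1) (by linarith)).comp h0
      refine this.congr fun N => ?_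
      simp only [Function.comp_apply]
      ring_nf
    have := ((tendsto_const_nhds (x := (1:ℝ))).sub h1').div_const (σ-1)
    simpa using this
  exact le_of_tendsto' hlim key


/-- Upper zeta bound. -/
lemma zeta_upper {σ : ℝ} (h1 : 1 < σ) (h2 : σ ≤ 2) :
    ∑' n : ℕ, (n : ℝ) ^ (-σ) ≤ 1 + 1 / (σ - 1) := by
  have hsum : Summable (fun n : ℕ => (n : ℝ) ^ (-σ)) := summable_rpow_neg h1
  have hsum1 : Summable (fun n : ℕ => ((n : ℝ) + 1) ^ (-σ)) := by
    have := (summable_nat_add_iff 1).mpr hsum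
    refine this.congr fun n => ?_
    push_cast; ring_nf
  have hsum2 : Summable (fun n : ℕ => ((n : ℝ) + 1 + 1) ^ (-σ)) := by
    have := (summable_nat_add_iff 1).mpr hsum1
    refine this.congr fun n => ?_
    push_cast; ring_nf
  have hterm : ∀ n : ℕ, ((n:ℝ)+1+1) ^ (-σ) ≤
      (((n:ℝ)+1) ^ (1-σ) - ((n:ℝ)+1+1) ^ (1-σ)) / (σ-1) := by
    intro n
    set t : ℝ := (n:ℝ)+1+1 with ht
    have ht1 : (2:ℝ) ≤ t := by rw [ht]; linarith [Nat.cast_nonneg (α := ℝ) n]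
    have ht0 : (0:ℝ) < t := by linarith
    have h6 : 1/t ≤ 1/2 := by apply one_div_le_one_div_of_le <;> linarith
    have h7 : 0 < 1/t := by positivity
    have hb := bernoulli_neg (s := -(1/t)) (a := 1-σ)
      (by linarith) (by linarith) (by linarith)
    have hnn : (0:ℝ) ≤ 1 + -(1/t) := by linarith
    have hmul : t ^ (1-σ) * (1 + -(1/t)) ^ (1-σ) = (t-1) ^ (1-σ) := by
      rw [← Real.mul_rpow ht0.le hnn]
      congr 1
      field_simp
      ring
    have htpos : (0:ℝ) < t ^ (1-σ) := Real.rpow_pos_of_pos ht0 _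
    have h3 : t ^ (1-σ) * (1 + (1-σ) * (-(1/t))) ≤ (t-1) ^ (1-σ) := by
      calc t ^ (1-σ) * (1 + (1-σ) * (-(1/t))) ≤ t ^ (1-σ) * (1 + -(1/t)) ^ (1-σ) :=
            mul_le_mul_of_nonneg_left hb htpos.le
      _ = (t-1) ^ (1-σ) := hmul
    have h4 : t ^ (1-σ) * (1/t) = t ^ (-σ) := by
      rw [one_div, ← Real.rpow_neg_one t, ← Real.rpow_add ht0]; ring_nf
    have h5 : ((n:ℝ)+1) = t - 1 := by rw [ht]; ring
    rw [h5, le_div_iff₀ (by linarith : (0:ℝ) < σ - 1)]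
    nlinarith [h3, h4]
  have htail : ∑' n : ℕ, ((n:ℝ)+1+1) ^ (-σ) ≤ 1 / (σ-1) := by
    apply Real.tsum_le_of_sum_range_le (fun n => Real.rpow_nonneg (by positivity) _)
    intro N
    calc ∑ n ∈ Finset.range N, ((n:ℝ)+1+1) ^ (-σ)
        ≤ ∑ n ∈ Finset.range N, (((n:ℝ)+1) ^ (1-σ) - ((n:ℝ)+1+1) ^ (1-σ)) / (σ-1) :=
          Finset.sum_le_sum fun n _ => hterm n
      _ = (∑ n ∈ Finset.range N, (((n:ℝ)+1) ^ (1-σ) - ((n:ℝ)+1+1) ^ (1-σ))) / (σ-1) := by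
          rw [Finset.sum_div]
      _ = (1 - ((N:ℝ)+1) ^ (1-σ)) / (σ-1) := by
          congr 1
          have := Finset.sum_range_sub' (f := fun n : ℕ => ((n:ℝ)+1) ^ (1-σ)) N
          push_cast at this
          rw [this]; norm_num
      _ ≤ 1 / (σ-1) := by
          apply div_le_div_of_nonneg_right ?_ (by linarith)
          · have : (0:ℝ) ≤ ((N:ℝ)+1) ^ (1-σ) := Real.rpow_nonneg (by positivity) _
            linarith
  calc ∑' n : ℕ, (n : ℝ) ^ (-σ)
      = (0:ℝ) ^ (-σ) + ∑' n : ℕ, ((n:ℝ)+1) ^ (-σ) := by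
        rw [Summable.tsum_eq_zero_add hsum]
        congr 1
        · norm_num
        · exact tsum_congr fun b => by push_cast; ring_nf
    _ = (0:ℝ) ^ (-σ) + ((1:ℝ) ^ (-σ) + ∑' n : ℕ, ((n:ℝ)+1+1) ^ (-σ)) := by
        rw [Summable.tsum_eq_zero_add hsum1]
        congr 2
        · norm_num
        · exact tsum_congr fun b => by push_cast; ring_nf
    _ ≤ 1 + 1 / (σ - 1) := by
        rw [Real.zero_rpow (by linarith : -σ ≠ 0), Real.one_rpow]
        linarith [htail]


lemma prime_two_le (p : Nat.Primes) : (2:ℝ) ≤ (p:ℕ) := by exact_mod_cast p.prop.two_le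

lemma rpow_neg_lt_half {σ : ℝ} (h1 : 1 < σ) (p : Nat.Primes) :
    ((p:ℕ):ℝ) ^ (-σ) ≤ 1/2 := by
  have h2 := prime_two_le p
  calc ((p:ℕ):ℝ) ^ (-σ) ≤ ((p:ℕ):ℝ) ^ (-1:ℝ) :=
        Real.rpow_le_rpow_of_exponent_le (by linarith) (by linarith)
    _ = ((p:ℕ):ℝ)⁻¹ := Real.rpow_neg_one _
    _ ≤ 1/2 := by rw [one_div]; exact inv_anti₀ (by norm_num) h2

lemma summable_primes_rpow {σ : ℝ} (h1 : 1 < σ) :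
    Summable (fun p : Nat.Primes => ((p:ℕ):ℝ) ^ (-σ)) :=
  (summable_rpow_neg h1).subtype _

/-- Euler product, real log form. -/
lemma exp_primes_eq {σ : ℝ} (h1 : 1 < σ) :
    Real.exp (∑' p : Nat.Primes, -Real.log (1 - ((p:ℕ):ℝ) ^ (-σ))) =
      ∑' n : ℕ, (n : ℝ) ^ (-σ) := by
  have hs : 1 < (σ:ℂ).re := by simpa using h1
  have H := EulerProduct.exp_tsum_primes_log_eq_tsum
    (f := riemannZetaSummandHom (Complex.ne_zero_of_one_lt_re hs)) (summable_riemannZetaSummand hs)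
  have hfn : ∀ n : ℕ, riemannZetaSummandHom (Complex.ne_zero_of_one_lt_re hs) n
      = (((n:ℝ) ^ (-σ) : ℝ) : ℂ) := by
    intro n
    show (n:ℂ) ^ (-(σ:ℂ)) = _
    rw [show ((n:ℂ)) = (((n:ℝ)):ℂ) by push_cast; rfl,
      show (-(σ:ℂ)) = (((-σ : ℝ)):ℂ) by push_cast; rfl,
      Complex.ofReal_cpow (Nat.cast_nonneg n)]
  have hlog : ∀ p : Nat.Primes, -Complex.log (1 - riemannZetaSummandHom
      (Complex.ne_zero_of_one_lt_re hs) (p:ℕ)) = (((-Real.log (1 - ((p:ℕ):ℝ) ^ (-σ))) : ℝ) : ℂ) := by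
    intro p
    rw [hfn]
    have hpos : (0:ℝ) < 1 - ((p:ℕ):ℝ) ^ (-σ) := by
      have := rpow_neg_lt_half h1 p; linarith
    rw [show (1 : ℂ) - (((((p:ℕ):ℝ) ^ (-σ)) : ℝ) : ℂ) = (((1 - ((p:ℕ):ℝ) ^ (-σ)) : ℝ) : ℂ) by
      push_cast; ring, ← Complex.ofReal_log hpos.le, Complex.ofReal_neg]
  rw [funext hfn] at H
  have e1 : (∑' p : Nat.Primes, -Complex.log (1 - ((((p:ℕ):ℝ) ^ (-σ) : ℝ) : ℂ)))
      = (((∑' p : Nat.Primes, -Real.log (1 - ((p:ℕ):ℝ) ^ (-σ))) : ℝ) : ℂ) := by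
    rw [Complex.ofReal_tsum]
    refine tsum_congr fun p => ?_
    have := hlog p
    rw [hfn] at this
    exact this
  rw [e1, ← Complex.ofReal_exp, ← Complex.ofReal_tsum] at H
  exact_mod_cast H

lemma neg_log_one_sub_bounds {t : ℝ} (h0 : 0 ≤ t) (h : t ≤ 1/2) :
    t ≤ -Real.log (1 - t) ∧ -Real.log (1 - t) ≤ t + 2*t^2 := by
  have h1 : (0:ℝ) < 1 - t := by linarith
  constructor
  · have := Real.log_le_sub_one_of_pos h1
    linarith
  · have e : -Real.log (1 - t) = Real.log (1-t)⁻¹ := by rw [Real.log_inv]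
    rw [e]
    calc Real.log (1-t)⁻¹ ≤ Real.log (1 + t + 2*t^2) := by
          apply Real.log_le_log (by positivity)
          rw [inv_eq_one_div, div_le_iff₀ h1]
          nlinarith
      _ ≤ t + 2*t^2 := by
          have := Real.log_le_sub_one_of_pos (show (0:ℝ) < 1 + t + 2*t^2 by positivity)
          linarith


noncomputable def F (σ : ℝ) : ℝ := ∑' p : Nat.Primes, ((p:ℕ):ℝ) ^ (-σ)

lemma term_sq_le {σ : ℝ} (h1 : 1 < σ) (p : Nat.Primes) :
    (((p:ℕ):ℝ) ^ (-σ))^2 ≤ 1/(((p:ℕ):ℝ) - 1) * (1/((p:ℕ):ℝ)) := by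
  have h2 := prime_two_le p
  have hinv : ((p:ℕ):ℝ) ^ (-σ) ≤ ((p:ℕ):ℝ)⁻¹ := by
    calc ((p:ℕ):ℝ) ^ (-σ) ≤ ((p:ℕ):ℝ) ^ (-1:ℝ) :=
          Real.rpow_le_rpow_of_exponent_le (by linarith) (by linarith)
      _ = ((p:ℕ):ℝ)⁻¹ := Real.rpow_neg_one _
  have hnn : 0 ≤ ((p:ℕ):ℝ) ^ (-σ) := Real.rpow_nonneg (by positivity) _
  calc (((p:ℕ):ℝ) ^ (-σ))^2 ≤ (((p:ℕ):ℝ)⁻¹)^2 := by nlinarith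
    _ ≤ 1/(((p:ℕ):ℝ) - 1) * (1/((p:ℕ):ℝ)) := by
      rw [sq, ← one_div, div_mul_div_comm, div_mul_div_comm]
      apply div_le_div_of_nonneg_left (by norm_num) (by nlinarith) (by nlinarith)

lemma sum_primes_sq_le {σ : ℝ} (h1 : 1 < σ) :
    ∑' p : Nat.Primes, 2*((((p:ℕ):ℝ) ^ (-σ))^2) ≤ 2 := by
  set g : ℕ → ℝ := fun n => 2/(((n:ℝ)+1)*((n:ℝ)+2)) with hg
  have hgterm : ∀ n : ℕ, g n = 2/((n:ℝ)+1) - 2/((n:ℝ)+2) := by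
    intro n
    rw [hg]
    have h1 : ((n:ℝ)+1) ≠ 0 := by positivity
    have h2 : ((n:ℝ)+2) ≠ 0 := by positivity
    field_simp
    ring
  have hgsummable : Summable g := by
    have hbase : Summable (fun n : ℕ => (1:ℝ)/(n:ℝ)^2) := by
      simpa using Real.summable_one_div_nat_pow.mpr one_lt_two
    have hshift := (summable_nat_add_iff 1).mpr hbase
    apply Summable.of_nonneg_of_le (fun n => by positivity) ?_ (hshift.mul_left 2)
    intro n
    rw [hg]
    simp only [mul_one_div]
    push_cast
    apply div_le_div_of_nonneg_left (by norm_num) (by positivity)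
    nlinarith [sq_nonneg ((n:ℝ)+1)]
  have hgsum : ∑' n : ℕ, g n ≤ 2 := by
    apply Real.tsum_le_of_sum_range_le (fun n => by rw [hg]; positivity)
    intro N
    calc ∑ n ∈ Finset.range N, g n
        = ∑ n ∈ Finset.range N, ((fun k : ℕ => 2/((k:ℝ)+1)) n - (fun k : ℕ => 2/((k:ℝ)+1)) (n+1)) := by
          refine Finset.sum_congr rfl fun n _ => ?_
          rw [hgterm n]
          push_cast
          ring_nf
      _ = 2/((0:ℝ)+1) - 2/((N:ℝ)+1) := by
          rw [Finset.sum_range_sub' (f := fun k : ℕ => 2/((k:ℝ)+1)) N]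
          norm_num
      _ ≤ 2 := by
          have : (0:ℝ) ≤ 2/((N:ℝ)+1) := by positivity
          norm_num
          linarith
  refine le_trans ?_ hgsum
  apply Summable.tsum_le_tsum_of_inj (fun p : Nat.Primes => (p:ℕ) - 2)
  · intro p q hpq
    have hp2 := p.prop.two_le
    have hq2 := q.prop.two_le
    simp only at hpq
    exact Subtype.ext (by omega)
  · intro c _
    rw [hg]; positivity
  · intro p
    have h2 := p.prop.two_le
    have hcast : (((p:ℕ) - 2 : ℕ):ℝ) = ((p:ℕ):ℝ) - 2 := by
      push_cast [Nat.cast_sub h2]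
      ring
    rw [hg]
    simp only
    rw [hcast]
    have e1 : ((p:ℕ):ℝ) - 2 + 1 = ((p:ℕ):ℝ) - 1 := by ring
    have e2 : ((p:ℕ):ℝ) - 2 + 2 = ((p:ℕ):ℝ) := by ring
    rw [e1, e2]
    have := term_sq_le h1 p
    have h2r : (2:ℝ) ≤ ((p:ℕ):ℝ) := prime_two_le p
    calc 2*((((p:ℕ):ℝ) ^ (-σ))^2) ≤ 2*(1/(((p:ℕ):ℝ) - 1) * (1/((p:ℕ):ℝ))) := by linarith
      _ = 2/((((p:ℕ):ℝ) - 1)*((p:ℕ):ℝ)) := by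
          rw [div_mul_div_comm]
          ring_nf
  · apply Summable.of_nonneg_of_le (fun p => by positivity) ?_
      ((summable_primes_rpow h1).mul_left 2)
    intro p
    have := rpow_neg_lt_half h1 p
    have hnn : 0 ≤ ((p:ℕ):ℝ) ^ (-σ) := Real.rpow_nonneg (by positivity) _
    nlinarith
  · exact hgsummable



lemma summable_neg_log {σ : ℝ} (h1 : 1 < σ) :
    Summable (fun p : Nat.Primes => -Real.log (1 - ((p:ℕ):ℝ) ^ (-σ))) := by
  apply Summable.of_nonneg_of_le ?_ ?_ ((summable_primes_rpow h1).mul_left 2)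
  · intro p
    have hb := neg_log_one_sub_bounds (Real.rpow_nonneg (by positivity) _)
      (rpow_neg_lt_half h1 p)
    have hnn : 0 ≤ ((p:ℕ):ℝ) ^ (-σ) := Real.rpow_nonneg (by positivity) _
    linarith [hb.1]
  · intro p
    have hb := neg_log_one_sub_bounds (Real.rpow_nonneg (by positivity) _)
      (rpow_neg_lt_half h1 p)
    have h12 := rpow_neg_lt_half h1 p
    have hnn : 0 ≤ ((p:ℕ):ℝ) ^ (-σ) := Real.rpow_nonneg (by positivity) _
    nlinarith [hb.2]

lemma F_le_log {σ : ℝ} (h1 : 1 < σ) (h2 : σ ≤ 2) :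
    F σ ≤ Real.log (1/(σ-1)) + 1 := by
  have hL : Real.exp (∑' p : Nat.Primes, -Real.log (1 - ((p:ℕ):ℝ) ^ (-σ))) =
      ∑' n : ℕ, (n : ℝ) ^ (-σ) := exp_primes_eq h1
  set L := ∑' p : Nat.Primes, -Real.log (1 - ((p:ℕ):ℝ) ^ (-σ)) with hLdef
  have hFL : F σ ≤ L := by
    apply Summable.tsum_le_tsum ?_ (summable_primes_rpow h1) (summable_neg_log h1)
    intro p
    exact (neg_log_one_sub_bounds (Real.rpow_nonneg (by positivity) _)
      (rpow_neg_lt_half h1 p)).1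
  have hZ : ∑' n : ℕ, (n : ℝ) ^ (-σ) ≤ 2/(σ-1) := by
    have := zeta_upper h1 h2
    have h3 : (1:ℝ) ≤ 1/(σ-1) := by
      rw [le_div_iff₀ (by linarith)]; linarith
    calc ∑' n : ℕ, (n : ℝ) ^ (-σ) ≤ 1 + 1/(σ-1) := this
      _ ≤ 1/(σ-1) + 1/(σ-1) := by linarith
      _ = 2/(σ-1) := by ring
  have hLlog : L = Real.log (∑' n : ℕ, (n : ℝ) ^ (-σ)) := by
    rw [← hL, Real.log_exp]
  have hlog2 : Real.log (∑' n : ℕ, (n : ℝ) ^ (-σ)) ≤ Real.log (2/(σ-1)) :=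
    Real.log_le_log (by rw [← hL]; positivity) hZ
  have hsplit : Real.log (2/(σ-1)) = Real.log 2 + Real.log (1/(σ-1)) := by
    rw [show (2:ℝ)/(σ-1) = 2 * (1/(σ-1)) by ring,
      Real.log_mul (by norm_num) (by
        have h9 : (0:ℝ) < σ - 1 := by linarith
        positivity)]
  have hlog2' : Real.log 2 ≤ 1 := by
    have := Real.log_le_sub_one_of_pos (show (0:ℝ) < 2 by norm_num)
    linarith
  calc F σ ≤ L := hFL
    _ = Real.log (∑' n : ℕ, (n : ℝ) ^ (-σ)) := hLlog
    _ ≤ Real.log 2 + Real.log (1/(σ-1)) := by rw [← hsplit]; exact hlog2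
    _ ≤ Real.log (1/(σ-1)) + 1 := by linarith

lemma log_le_F {σ : ℝ} (h1 : 1 < σ) (h2 : σ ≤ 2) :
    Real.log (1/(σ-1)) - 2 ≤ F σ := by
  have hL : Real.exp (∑' p : Nat.Primes, -Real.log (1 - ((p:ℕ):ℝ) ^ (-σ))) =
      ∑' n : ℕ, (n : ℝ) ^ (-σ) := exp_primes_eq h1
  set L := ∑' p : Nat.Primes, -Real.log (1 - ((p:ℕ):ℝ) ^ (-σ)) with hLdef
  have hLF : L ≤ F σ + 2 := by
    have step : L ≤ ∑' p : Nat.Primes, (((p:ℕ):ℝ) ^ (-σ) + 2*((((p:ℕ):ℝ) ^ (-σ))^2)) := by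
      apply Summable.tsum_le_tsum ?_ (summable_neg_log h1)
        ((summable_primes_rpow h1).add ?_)
      · intro p
        have hb := (neg_log_one_sub_bounds (Real.rpow_nonneg (by positivity) _)
          (rpow_neg_lt_half h1 p)).2
        linarith
      · apply Summable.of_nonneg_of_le (fun p => by positivity) ?_
          ((summable_primes_rpow h1).mul_left 2)
        intro p
        have := rpow_neg_lt_half h1 p
        have hnn : 0 ≤ ((p:ℕ):ℝ) ^ (-σ) := Real.rpow_nonneg (by positivity) _
        nlinarith
    have hsq : Summable (fun p : Nat.Primes => 2*((((p:ℕ):ℝ) ^ (-σ))^2)) := by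
      apply Summable.of_nonneg_of_le (fun p => by positivity) ?_
        ((summable_primes_rpow h1).mul_left 2)
      intro p
      have := rpow_neg_lt_half h1 p
      have hnn : 0 ≤ ((p:ℕ):ℝ) ^ (-σ) := Real.rpow_nonneg (by positivity) _
      nlinarith
    rw [Summable.tsum_add (summable_primes_rpow h1) hsq] at step
    have := sum_primes_sq_le h1
    calc L ≤ F σ + ∑' p : Nat.Primes, 2*((((p:ℕ):ℝ) ^ (-σ))^2) := step
      _ ≤ F σ + 2 := by linarith
  have hZlog : Real.log (1/(σ-1)) ≤ L := by
    have hz := zeta_lower h1 h2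
    have : Real.log (1/(σ-1)) ≤ Real.log (∑' n : ℕ, (n : ℝ) ^ (-σ)) :=
      Real.log_le_log (by
        have h9 : (0:ℝ) < σ - 1 := by linarith
        positivity) hz
    rwa [← hL, Real.log_exp] at this
  linarith



lemma summable_log_mul {σ : ℝ} (h1 : 1 < σ) :
    Summable (fun p : Nat.Primes => Real.log ((p:ℕ):ℝ) * ((p:ℕ):ℝ) ^ (-σ)) := by
  set ε : ℝ := (σ-1)/2 with hε
  have hεpos : 0 < ε := by rw [hε]; linarith
  have hσ' : 1 < (σ+1)/2 := by linarith
  apply Summable.of_nonneg_of_le ?_ ?_ ((summable_primes_rpow hσ').mul_left (1/ε))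
  · intro p
    have h2 := prime_two_le p
    have : 0 ≤ Real.log ((p:ℕ):ℝ) := Real.log_nonneg (by linarith)
    positivity
  · intro p
    have h2 := prime_two_le p
    have hp0 : (0:ℝ) < ((p:ℕ):ℝ) := by linarith
    have hlog := Real.log_le_rpow_div (le_of_lt hp0) hεpos
    have hφnn : (0:ℝ) ≤ ((p:ℕ):ℝ) ^ (-σ) := Real.rpow_nonneg hp0.le _
    calc Real.log ((p:ℕ):ℝ) * ((p:ℕ):ℝ) ^ (-σ)
        ≤ (((p:ℕ):ℝ) ^ ε / ε) * ((p:ℕ):ℝ) ^ (-σ) := by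
          apply mul_le_mul_of_nonneg_right hlog hφnn
      _ = (1/ε) * (((p:ℕ):ℝ) ^ ε * ((p:ℕ):ℝ) ^ (-σ)) := by ring
      _ = (1/ε) * ((p:ℕ):ℝ) ^ (-((σ+1)/2)) := by
          rw [← Real.rpow_add hp0]
          congr 1
          rw [hε]; ring_nf

lemma sum_log_le {σ δ : ℝ} (h1 : 1 < σ) (hδ : 0 < δ) :
    δ * ∑' p : Nat.Primes, Real.log ((p:ℕ):ℝ) * ((p:ℕ):ℝ) ^ (-(σ+δ)) ≤ F σ - F (σ+δ) := by
  have h1' : 1 < σ + δ := by linarith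
  have hterm : ∀ p : Nat.Primes, δ * (Real.log ((p:ℕ):ℝ) * ((p:ℕ):ℝ) ^ (-(σ+δ)))
      ≤ ((p:ℕ):ℝ) ^ (-σ) - ((p:ℕ):ℝ) ^ (-(σ+δ)) := by
    intro p
    have h2 := prime_two_le p
    have hp0 : (0:ℝ) < ((p:ℕ):ℝ) := by linarith
    set u : ℝ := δ * Real.log ((p:ℕ):ℝ) with hu
    have hunn : 0 ≤ u := by
      rw [hu]
      have : 0 ≤ Real.log ((p:ℕ):ℝ) := Real.log_nonneg (by linarith)
      positivity
    have hsplit : ((p:ℕ):ℝ) ^ (-(σ+δ)) = ((p:ℕ):ℝ) ^ (-σ) * Real.exp (-u) := by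
      rw [show -(σ+δ) = -σ + (-δ) by ring, Real.rpow_add hp0]
      congr 1
      rw [Real.rpow_def_of_pos hp0, hu]
      congr 1
      ring
    have hkey : (u + 1) * Real.exp (-u) ≤ 1 := by
      have := Real.add_one_le_exp u
      have hepos : 0 < Real.exp (-u) := Real.exp_pos _
      have : (u+1) * Real.exp (-u) ≤ Real.exp u * Real.exp (-u) := by nlinarith
      rwa [← Real.exp_add, add_neg_cancel, Real.exp_zero] at this
    have hφnn : (0:ℝ) ≤ ((p:ℕ):ℝ) ^ (-σ) := Real.rpow_nonneg hp0.le _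
    rw [hsplit]
    have : δ * (Real.log ((p:ℕ):ℝ) * (((p:ℕ):ℝ) ^ (-σ) * Real.exp (-u)))
        = ((p:ℕ):ℝ) ^ (-σ) * (u * Real.exp (-u)) := by rw [hu]; ring
    rw [this]
    have h5 : u * Real.exp (-u) ≤ 1 - Real.exp (-u) := by nlinarith [Real.exp_pos (-u)]
    nlinarith
  have hψ : Summable (fun p : Nat.Primes => Real.log ((p:ℕ):ℝ) * ((p:ℕ):ℝ) ^ (-(σ+δ))) :=
    summable_log_mul h1'
  calc δ * ∑' p : Nat.Primes, Real.log ((p:ℕ):ℝ) * ((p:ℕ):ℝ) ^ (-(σ+δ))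
      = ∑' p : Nat.Primes, δ * (Real.log ((p:ℕ):ℝ) * ((p:ℕ):ℝ) ^ (-(σ+δ))) :=
        (tsum_mul_left).symm
    _ ≤ ∑' p : Nat.Primes, (((p:ℕ):ℝ) ^ (-σ) - ((p:ℕ):ℝ) ^ (-(σ+δ))) := by
        apply Summable.tsum_le_tsum hterm (hψ.mul_left δ)
        exact (summable_primes_rpow h1).sub (summable_primes_rpow h1')
    _ = F σ - F (σ+δ) :=
        Summable.tsum_sub (summable_primes_rpow h1) (summable_primes_rpow h1')


end Stmt4

open Stmt4 in
/-- There exists an absolute constant `C > 0` such that for every real `x ≥ 10` and every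
complex `z` with `0 ≤ Re z` and `|z| ≤ 1/log x`, one has
`|∑_{p ≤ √x, p prime} p^{-(1 + 2/log x + 2z)} · (log(x/p²)/log x) − log log x| ≤ C`. -/
theorem stmt_4 :
    ∃ C : ℝ, 0 < C ∧ ∀ x : ℝ, 10 ≤ x → ∀ z : ℂ, 0 ≤ z.re →
      norm z ≤ 1 / Real.log x →
      norm
        ((∑ p ∈ (Finset.Iic ⌊Real.sqrt x⌋₊).filter Nat.Prime,
            (p : ℂ) ^ (-(1 + 2 / (Real.log x : ℂ) + 2 * z))
              * ((Real.log (x / (p : ℝ) ^ 2) / Real.log x : ℝ) : ℂ))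
          - (Real.log (Real.log x) : ℂ)) ≤ C := by
  refine ⟨30, by norm_num, ?_⟩
  intro x hx z hzre hzabs
  have hx0 : (0:ℝ) < x := by linarith
  set ℓ : ℝ := Real.log x with hℓdef
  have hℓ2 : 2 ≤ ℓ := by
    rw [hℓdef, Real.le_log_iff_exp_le hx0]
    have h1 := Real.exp_one_lt_d9
    have h2 : Real.exp 2 = Real.exp 1 * Real.exp 1 := by
      rw [← Real.exp_add]; norm_num
    nlinarith [Real.exp_pos 1]
  have hℓ0 : (0:ℝ) < ℓ := by linarith
  set σ0 : ℝ := 1 + 2/ℓ with hσ0def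
  have hσ0a : 1 < σ0 := by
    rw [hσ0def]
    have : 0 < 2/ℓ := by positivity
    linarith
  have hσ0b : σ0 ≤ 2 := by
    rw [hσ0def]
    have : 2/ℓ ≤ 1 := by rw [div_le_one hℓ0]; linarith
    linarith
  have hsx0 : (0:ℝ) < Real.sqrt x := Real.sqrt_pos.mpr hx0
  -- the G bound
  set G : ℝ := ∑' p : Nat.Primes, Real.log ((p:ℕ):ℝ) * ((p:ℕ):ℝ) ^ (-σ0) with hGdef
  have hGnn : 0 ≤ G := by
    rw [hGdef]
    apply tsum_nonneg
    intro p
    have h2 := prime_two_le p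
    have : 0 ≤ Real.log ((p:ℕ):ℝ) := Real.log_nonneg (by linarith)
    positivity
  have hG : G ≤ 4*ℓ := by
    have hσ1a : 1 < 1 + 1/ℓ := by
      have : 0 < 1/ℓ := by positivity
      linarith
    have hσ1b : 1 + 1/ℓ ≤ 2 := by
      have : 1/ℓ ≤ 1 := by rw [div_le_one hℓ0]; linarith
      linarith
    have hkey := sum_log_le (σ := 1 + 1/ℓ) (δ := 1/ℓ) hσ1a (by positivity)
    have hEq : (1 + 1/ℓ) + 1/ℓ = σ0 := by rw [hσ0def]; ring
    rw [hEq] at hkey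
    have hFa := F_le_log hσ1a hσ1b
    have hFb := log_le_F hσ0a hσ0b
    have e1 : 1/((1 + 1/ℓ)-1) = ℓ := by
      field_simp
      ring
    have e2 : 1/(σ0-1) = ℓ/2 := by
      rw [hσ0def]
      field_simp
      ring
    have e3 : Real.log (ℓ/2) = Real.log ℓ - Real.log 2 := Real.log_div (by linarith) (by norm_num)
    have hlog2 : Real.log 2 ≤ 1 := by
      have := Real.log_le_sub_one_of_pos (show (0:ℝ) < 2 by norm_num)
      linarith
    rw [e1] at hFa
    rw [e2, e3] at hFb
    have h4 : (1/ℓ) * G ≤ 4 := by linarith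
    have := mul_le_mul_of_nonneg_left h4 hℓ0.le
    calc G = ℓ * ((1/ℓ) * G) := by field_simp
      _ ≤ ℓ * 4 := this
      _ = 4*ℓ := by ring
  -- step 5 : |F σ0 - log ℓ| ≤ 3
  have key2 : |F σ0 - Real.log ℓ| ≤ 3 := by
    have hFa := F_le_log hσ0a hσ0b
    have hFb := log_le_F hσ0a hσ0b
    have e2 : 1/(σ0-1) = ℓ/2 := by
      rw [hσ0def]; field_simp; ring
    have e3 : Real.log (ℓ/2) = Real.log ℓ - Real.log 2 := Real.log_div (by linarith) (by norm_num)
    have hlog2 : Real.log 2 ≤ 1 := by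
      have := Real.log_le_sub_one_of_pos (show (0:ℝ) < 2 by norm_num)
      linarith
    have hlog2' : 0 ≤ Real.log 2 := Real.log_nonneg (by norm_num)
    rw [e2, e3] at hFa hFb
    rw [abs_le]
    constructor <;> linarith
  -- notation
  set N : ℕ := ⌊Real.sqrt x⌋₊ with hNdef
  set t : ℕ → ℂ := fun n => (n : ℂ) ^ (-(1 + 2 / (ℓ : ℂ) + 2 * z))
      * ((Real.log (x / (n : ℝ) ^ 2) / ℓ : ℝ) : ℂ) with htdef
  set P : Finset ℕ := (Finset.Iic N).filter Nat.Prime with hPdef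
  set c : ℕ → ℂ := fun n => if n ∈ P then t n else 0 with hcdef
  -- termwise bound
  have keybd : ∀ p : Nat.Primes, ‖c (p:ℕ) - ((((p:ℕ):ℝ) ^ (-σ0) : ℝ) : ℂ)‖
      ≤ 6/ℓ * (Real.log ((p:ℕ):ℝ) * ((p:ℕ):ℝ) ^ (-σ0)) := by
    intro p
    set pr : ℝ := ((p:ℕ):ℝ) with hprdef
    have hpr2 : (2:ℝ) ≤ pr := prime_two_le p
    have hpr0 : (0:ℝ) < pr := by linarith
    have hφnn : (0:ℝ) ≤ pr ^ (-σ0) := Real.rpow_nonneg hpr0.le _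
    by_cases hmem : (p:ℕ) ∈ P
    · -- p small
      have hple : (p:ℕ) ≤ N := Finset.mem_Iic.mp (Finset.mem_filter.mp hmem).1
      have hprsx : pr ≤ Real.sqrt x := by
        calc pr ≤ (N:ℝ) := by rw [hprdef]; exact_mod_cast hple
          _ ≤ Real.sqrt x := Nat.floor_le hsx0.le
      have hlph : Real.log pr ≤ ℓ/2 := by
        calc Real.log pr ≤ Real.log (Real.sqrt x) := Real.log_le_log hpr0 hprsx
          _ = ℓ/2 := by rw [Real.log_sqrt hx0.le]
      have hlp0 : 0 ≤ Real.log pr := Real.log_nonneg (by linarith)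
      have hw : Real.log (x / pr ^ 2) / ℓ = (ℓ - 2*Real.log pr)/ℓ := by
        rw [Real.log_div hx0.ne' (by positivity), Real.log_pow]
        push_cast
        rw [← hℓdef]
      set w : ℝ := (ℓ - 2*Real.log pr)/ℓ with hwdef
      have hw0 : 0 ≤ w := div_nonneg (by linarith) hℓ0.le
      have hw1 : w ≤ 1 := by rw [hwdef, div_le_one hℓ0]; linarith
      have hpc0 : ((p:ℕ):ℂ) ≠ 0 := Nat.cast_ne_zero.mpr p.prop.pos.ne'
      have hcastp : ((p:ℕ):ℂ) = ((pr:ℝ):ℂ) := by rw [hprdef]; push_cast; rfl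
      have hexp : (-(1 + 2 / (ℓ:ℂ) + 2 * z)) = (((-σ0 : ℝ)):ℂ) + (-(2*z)) := by
        rw [hσ0def]; push_cast; ring
      have hsplit : ((p:ℕ):ℂ) ^ (-(1 + 2 / (ℓ:ℂ) + 2 * z))
          = ((pr ^ (-σ0) : ℝ) : ℂ) * ((p:ℕ):ℂ) ^ (-(2*z)) := by
        rw [hexp, Complex.cpow_add _ _ hpc0]
        congr 1
        rw [hcastp, Complex.ofReal_cpow hpr0.le]
      have hE : ((p:ℕ):ℂ) ^ (-(2*z)) = Complex.exp (((Real.log pr : ℝ):ℂ) * (-(2*z))) := by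
        rw [Complex.cpow_def_of_ne_zero hpc0]
        congr 2
        rw [hcastp, Complex.ofReal_log hpr0.le]
      have habsz : ‖z‖ ≤ 1/ℓ := hzabs
      have hargle : ‖((Real.log pr : ℝ):ℂ) * (-(2*z))‖ ≤ 1 := by
        rw [norm_mul, Complex.norm_real, Real.norm_eq_abs, norm_neg, norm_mul]
        simp only [Complex.norm_two]
        rw [abs_of_nonneg hlp0]
        calc Real.log pr * (2 * ‖z‖) ≤ (ℓ/2) * (2 * (1/ℓ)) := by
              apply mul_le_mul hlph ?_ (by positivity) (by linarith)
              apply mul_le_mul_of_nonneg_left habsz (by norm_num)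
          _ = 1 := by field_simp
      have hEbd : ‖((p:ℕ):ℂ) ^ (-(2*z)) - 1‖ ≤ 4 * Real.log pr / ℓ := by
        rw [hE]
        calc ‖Complex.exp (((Real.log pr : ℝ):ℂ) * (-(2*z))) - 1‖
            ≤ 2 * ‖((Real.log pr : ℝ):ℂ) * (-(2*z))‖ :=
              Complex.norm_exp_sub_one_le hargle
          _ = 2 * (Real.log pr * (2 * ‖z‖)) := by
              rw [norm_mul, Complex.norm_real, Real.norm_eq_abs, norm_neg, norm_mul]
              simp only [Complex.norm_two]
              rw [abs_of_nonneg hlp0]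
          _ ≤ 2 * (Real.log pr * (2 * (1/ℓ))) := by
              apply mul_le_mul_of_nonneg_left ?_ (by norm_num)
              apply mul_le_mul_of_nonneg_left ?_ hlp0
              apply mul_le_mul_of_nonneg_left habsz (by norm_num)
          _ = 4 * Real.log pr / ℓ := by field_simp; ring
      have hcval : c (p:ℕ) = ((pr ^ (-σ0) : ℝ) : ℂ) * (((p:ℕ):ℂ) ^ (-(2*z)) * ((w:ℝ):ℂ)) := by
        rw [hcdef]
        simp only [if_pos hmem]
        rw [htdef]
        simp only
        rw [show Real.log (x / ((p:ℕ):ℝ) ^ 2) / ℓ = w from hw, hsplit]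
        ring
      have hdiff : c (p:ℕ) - ((pr ^ (-σ0) : ℝ) : ℂ)
          = ((pr ^ (-σ0) : ℝ) : ℂ) * (((((p:ℕ):ℂ) ^ (-(2*z))) - 1) * ((w:ℝ):ℂ) + (((w:ℝ):ℂ) - 1)) := by
        rw [hcval]; ring
      rw [hdiff]
      rw [norm_mul]
      have h1 : ‖((pr ^ (-σ0) : ℝ) : ℂ)‖ = pr ^ (-σ0) := by
        rw [Complex.norm_real, Real.norm_eq_abs, abs_of_nonneg hφnn]
      rw [h1]
      have h2 : ‖((((p:ℕ):ℂ) ^ (-(2*z))) - 1) * ((w:ℝ):ℂ) + (((w:ℝ):ℂ) - 1)‖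
          ≤ 6 * Real.log pr / ℓ := by
        calc ‖((((p:ℕ):ℂ) ^ (-(2*z))) - 1) * ((w:ℝ):ℂ) + (((w:ℝ):ℂ) - 1)‖
            ≤ ‖((((p:ℕ):ℂ) ^ (-(2*z))) - 1) * ((w:ℝ):ℂ)‖ + ‖(((w:ℝ):ℂ) - 1)‖ :=
              norm_add_le _ _
          _ ≤ (4 * Real.log pr / ℓ) * 1 + (2 * Real.log pr / ℓ) := by
              apply add_le_add
              · rw [norm_mul]
                apply mul_le_mul hEbd ?_ (norm_nonneg _) (by positivity)
                rw [Complex.norm_real, Real.norm_eq_abs, abs_of_nonneg hw0]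
                exact hw1
              · rw [show (((w:ℝ):ℂ) - 1) = (((w - 1 : ℝ)):ℂ) by push_cast; ring,
                  Complex.norm_real, Real.norm_eq_abs, abs_of_nonpos (by linarith)]
                have hwe : w - 1 = -(2 * Real.log pr / ℓ) := by
                  rw [hwdef]
                  field_simp
                  ring
                linarith [hwe]
          _ = 6 * Real.log pr / ℓ := by ring
      calc pr ^ (-σ0) * ‖((((p:ℕ):ℂ) ^ (-(2*z))) - 1) * ((w:ℝ):ℂ) + (((w:ℝ):ℂ) - 1)‖
          ≤ pr ^ (-σ0) * (6 * Real.log pr / ℓ) := mul_le_mul_of_nonneg_left h2 hφnn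
        _ = 6/ℓ * (Real.log pr * pr ^ (-σ0)) := by field_simp
    · -- p large
      have hlt : N < (p:ℕ) := by
        by_contra hle
        exact hmem (Finset.mem_filter.mpr ⟨Finset.mem_Iic.mpr (Nat.le_of_not_lt hle), p.prop⟩)
      have hgt : Real.sqrt x ≤ pr := by
        have h1 : Real.sqrt x < (N:ℝ) + 1 := by
          have := Nat.lt_succ_floor (Real.sqrt x)
          rw [hNdef]
          exact_mod_cast this
        have h2 : ((N:ℝ) + 1) ≤ pr := by
          rw [hprdef]
          exact_mod_cast Nat.succ_le_of_lt hlt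
        linarith
      have hlpge : ℓ/2 ≤ Real.log pr := by
        calc ℓ/2 = Real.log (Real.sqrt x) := by rw [Real.log_sqrt hx0.le]
          _ ≤ Real.log pr := Real.log_le_log hsx0 hgt
      have hc0 : c (p:ℕ) = 0 := by rw [hcdef]; simp only [if_neg hmem]
      rw [hc0, zero_sub, norm_neg, Complex.norm_real, Real.norm_eq_abs, abs_of_nonneg hφnn]
      have h6 : 1 ≤ 6/ℓ * Real.log pr := by
        calc (1:ℝ) ≤ 6/ℓ * (ℓ/2) := by
              rw [show 6/ℓ * (ℓ/2) = 3 * (ℓ/ℓ) by ring, div_self hℓ0.ne']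
              norm_num
          _ ≤ 6/ℓ * Real.log pr := by
              apply mul_le_mul_of_nonneg_left hlpge (by positivity)
      calc pr ^ (-σ0) = 1 * pr ^ (-σ0) := by ring
        _ ≤ (6/ℓ * Real.log pr) * pr ^ (-σ0) := mul_le_mul_of_nonneg_right h6 hφnn
        _ = 6/ℓ * (Real.log pr * pr ^ (-σ0)) := by ring
  -- summabilities
  have hψ6 : Summable (fun p : Nat.Primes => 6/ℓ * (Real.log ((p:ℕ):ℝ) * ((p:ℕ):ℝ) ^ (-σ0))) :=
    (summable_log_mul hσ0a).mul_left _
  have hnormsum : Summable (fun p : Nat.Primes => ‖c (p:ℕ) - ((((p:ℕ):ℝ) ^ (-σ0) : ℝ) : ℂ)‖) :=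
    Summable.of_nonneg_of_le (fun p => norm_nonneg _) keybd hψ6
  have hdiffs : Summable (fun p : Nat.Primes => c (p:ℕ) - ((((p:ℕ):ℝ) ^ (-σ0) : ℝ) : ℂ)) :=
    hnormsum.of_norm
  have hφc : Summable (fun p : Nat.Primes => ((((p:ℕ):ℝ) ^ (-σ0) : ℝ) : ℂ)) :=
    Complex.summable_ofReal.mpr (summable_primes_rpow hσ0a)
  have hcs : Summable (fun p : Nat.Primes => c (p:ℕ)) := by
    have h := hdiffs.add hφc
    refine h.congr fun p => ?_
    ring
  -- sum identification
  have hSeq : (∑ p ∈ P, t p) = ∑' p : Nat.Primes, c (p:ℕ) := by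
    have h1 : (∑ p ∈ P, t p) = ∑ p ∈ P, c p :=
      Finset.sum_congr rfl fun n hn => by rw [hcdef]; simp only [if_pos hn]
    have h2 : ∑' n : ℕ, c n = ∑ p ∈ P, c p :=
      tsum_eq_sum (fun b hb => by rw [hcdef]; simp only [if_neg hb])
    have h3 : ∑' p : Nat.Primes, c (p:ℕ) = ∑' n : ℕ, c n := by
      apply tsum_subtype_eq_of_support_subset (s := {n : ℕ | n.Prime})
      intro n hn
      by_contra hnp
      apply hn
      rw [hcdef]
      simp only
      rw [if_neg]
      intro hmem
      exact hnp (Finset.mem_filter.mp hmem).2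
    rw [h3, h2, h1]
  have hFc : ((F σ0 : ℝ) : ℂ) = ∑' p : Nat.Primes, ((((p:ℕ):ℝ) ^ (-σ0) : ℝ) : ℂ) := by
    rw [show F σ0 = ∑' p : Nat.Primes, ((p:ℕ):ℝ) ^ (-σ0) from rfl, Complex.ofReal_tsum]
  have key1 : ‖(∑ p ∈ P, t p) - ((F σ0 : ℝ) : ℂ)‖ ≤ 24 := by
    rw [hSeq, hFc, ← Summable.tsum_sub hcs hφc]
    calc ‖∑' p : Nat.Primes, (c (p:ℕ) - ((((p:ℕ):ℝ) ^ (-σ0) : ℝ) : ℂ))‖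
        ≤ ∑' p : Nat.Primes, ‖c (p:ℕ) - ((((p:ℕ):ℝ) ^ (-σ0) : ℝ) : ℂ)‖ :=
          norm_tsum_le_tsum_norm hnormsum
      _ ≤ ∑' p : Nat.Primes, 6/ℓ * (Real.log ((p:ℕ):ℝ) * ((p:ℕ):ℝ) ^ (-σ0)) :=
          Summable.tsum_le_tsum keybd hnormsum hψ6
      _ = 6/ℓ * G := by rw [hGdef, tsum_mul_left]
      _ ≤ 6/ℓ * (4*ℓ) := mul_le_mul_of_nonneg_left hG (by positivity)
      _ = 24 := by field_simp; ring
  -- conclusion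
  have tri := norm_sub_le_norm_sub_add_norm_sub (∑ p ∈ P, t p) ((F σ0 : ℝ) : ℂ) ((Real.log ℓ : ℝ) : ℂ)
  have h2 : ‖((F σ0 : ℝ) : ℂ) - ((Real.log ℓ : ℝ) : ℂ)‖ = |F σ0 - Real.log ℓ| := by
    rw [← Complex.ofReal_sub, Complex.norm_real, Real.norm_eq_abs]
  rw [h2] at tri
  have main : ‖(∑ p ∈ P, t p) - ((Real.log ℓ : ℝ) : ℂ)‖ ≤ 30 := by
    linarith
  exact main
end

section
/- There exists an absolute constant C > 0 such that for every complex number w with Re(w) ≥ 0 and |w| ≥ 1, one has |∑_{n=1}^∞ (−w)^n/(n!·n) + log |w|| ≤ C. -/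
open MeasureTheory intervalIntegral

lemma ptsum (w : ℂ) (x : ℝ) (hx : x ≠ 0) :
    HasSum (fun n : ℕ => (-w)^(n+1) * (x:ℂ)^n / (Nat.factorial (n+1)))
      ((Complex.exp (-(w*x)) - 1) * ((x:ℂ))⁻¹) := by
  have he : HasSum (fun n : ℕ => (-(w*x))^n / (Nat.factorial n)) (Complex.exp (-(w*x))) := by
    rw [Complex.exp_eq_exp_ℂ]
    exact NormedSpace.expSeries_div_hasSum_exp _
  have h1 : HasSum (fun n : ℕ => (-(w*x))^(n+1) / (Nat.factorial (n+1)))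
      (Complex.exp (-(w*x)) - 1) := by
    rw [hasSum_nat_add_iff (f := fun n : ℕ => (-(w*x))^n / (Nat.factorial n)) 1]
    simpa using he
  have h2 := h1.mul_right ((x:ℂ))⁻¹
  suffices hfun : (fun n : ℕ => (-w)^(n+1) * (x:ℂ)^n / (Nat.factorial (n+1)))
      = fun n : ℕ => (-(w*x))^(n+1) / (Nat.factorial (n+1)) * ((x:ℂ))⁻¹ by
    rw [hfun]; exact h2
  funext n
  have hxc : (x:ℂ) ≠ 0 := by exact_mod_cast hx
  have hcanc : (x:ℂ)^(n+1) * ((x:ℂ))⁻¹ = (x:ℂ)^n := by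
    rw [pow_succ, mul_inv_cancel_right₀ hxc]
  have hneg : (-(w*(x:ℂ)))^(n+1) = (-w)^(n+1) * (x:ℂ)^(n+1) := by ring
  rw [hneg, div_mul_eq_mul_div, mul_assoc, hcanc]

lemma ioc_pow_int (n : ℕ) : ∫ x in Set.Ioc (0:ℝ) 1, x^n = 1/(n+1) := by
  rw [← intervalIntegral.integral_of_le zero_le_one, integral_pow]
  simp

lemma stepA (w : ℂ) (hsum : Summable fun n : ℕ =>
      ∫ x in Set.Ioc (0:ℝ) 1, ‖(-w)^(n+1) * (x:ℂ)^n / (Nat.factorial (n+1))‖) :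
    (∑' n : ℕ, (-w) ^ (n + 1) / ((Nat.factorial (n + 1) : ℂ) * ((n : ℂ) + 1)))
      = ∫ x in Set.Ioc (0:ℝ) 1, (Complex.exp (-(w*x)) - 1) * ((x:ℂ))⁻¹ := by
  have hFint : ∀ n : ℕ, IntegrableOn
      (fun x : ℝ => (-w)^(n+1) * (x:ℂ)^n / (Nat.factorial (n+1))) (Set.Ioc 0 1) := by
    intro n
    apply Continuous.integrableOn_Ioc
    continuity
  have key := MeasureTheory.hasSum_integral_of_summable_integral_norm hFint hsum
  have h1 : (∫ x in Set.Ioc (0:ℝ) 1,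
        ∑' n : ℕ, (-w)^(n+1) * (x:ℂ)^n / (Nat.factorial (n+1)))
      = ∫ x in Set.Ioc (0:ℝ) 1, (Complex.exp (-(w*x)) - 1) * ((x:ℂ))⁻¹ := by
    apply setIntegral_congr_fun measurableSet_Ioc
    intro x hx
    exact (ptsum w x (ne_of_gt hx.1)).tsum_eq
  have h2 : ∀ n : ℕ, (∫ x in Set.Ioc (0:ℝ) 1,
        (-w)^(n+1) * (x:ℂ)^n / (Nat.factorial (n+1)))
      = (-w) ^ (n + 1) / ((Nat.factorial (n + 1) : ℂ) * ((n : ℂ) + 1)) := by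
    intro n
    have : ∀ x : ℝ, (-w)^(n+1) * (x:ℂ)^n / (Nat.factorial (n+1))
        = ((-w)^(n+1) / (Nat.factorial (n+1))) * ((x^n : ℝ) : ℂ) := by
      intro x; push_cast; ring
    simp_rw [this]
    rw [MeasureTheory.integral_const_mul]
    have hI : (∫ a in Set.Ioc (0:ℝ) 1, ((a^n : ℝ) : ℂ)) = (((1:ℝ)/(n+1) : ℝ) : ℂ) := by
      rw [← ioc_pow_int n]
      norm_cast
    rw [hI]
    push_cast
    field_simp
  rw [← h1, ← key.tsum_eq]
  exact tsum_congr fun n => (h2 n).symm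


lemma hsum_lemma (w : ℂ) : Summable fun n : ℕ =>
    ∫ x in Set.Ioc (0:ℝ) 1, ‖(-w)^(n+1) * (x:ℂ)^n / (Nat.factorial (n+1))‖ := by
  have hs : Summable fun n : ℕ => (‖w‖)^(n+1) / (Nat.factorial (n+1)) := by
    have := Real.summable_pow_div_factorial (‖w‖)
    exact (summable_nat_add_iff 1).mpr this
  apply Summable.of_nonneg_of_le (fun n => integral_nonneg fun x => norm_nonneg _) _ hs
  intro n
  have hle : ∀ x ∈ Set.Ioc (0:ℝ) 1, ‖(-w)^(n+1) * (x:ℂ)^n / (Nat.factorial (n+1))‖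
      ≤ (‖w‖)^(n+1) / (Nat.factorial (n+1)) := by
    intro x hx
    rw [norm_div, norm_mul, norm_pow, norm_pow]
    simp only [norm_neg, Complex.norm_real, Real.norm_eq_abs, Complex.norm_natCast]
    rw [abs_of_pos hx.1]
    have hx1 : x^n ≤ 1 := pow_le_one₀ (le_of_lt hx.1) hx.2
    gcongr
    exact mul_le_of_le_one_right (by positivity) hx1
  calc (∫ x in Set.Ioc (0:ℝ) 1, ‖(-w)^(n+1) * (x:ℂ)^n / (Nat.factorial (n+1))‖)
      ≤ ∫ _x in Set.Ioc (0:ℝ) 1, (‖w‖)^(n+1) / (Nat.factorial (n+1)) := by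
        apply setIntegral_mono_on
        · apply Integrable.norm
          apply Continuous.integrableOn_Ioc
          continuity
        · exact integrableOn_const (by simp [Real.volume_Ioc])
        · exact measurableSet_Ioc
        · exact hle
    _ = (‖w‖)^(n+1) / (Nat.factorial (n+1)) := by
        rw [setIntegral_const]
        simp [Real.volume_Ioc]


lemma piece2 (w : ℂ) (hre : 0 ≤ w.re) (habs : 1 ≤ ‖w‖) :
    ‖(∫ x in ((‖w‖)⁻¹)..1, Complex.exp (-(w*x)) * ((x⁻¹:ℝ):ℂ))‖ ≤ 3 := by
  set a : ℝ := (‖w‖)⁻¹ with ha_def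
  have hw0 : (0:ℝ) < ‖w‖ := lt_of_lt_of_le one_pos habs
  have hwne : w ≠ 0 := by simpa using hw0.ne'
  have ha0 : 0 < a := inv_pos.2 hw0
  have ha1 : a ≤ 1 := inv_le_one_of_one_le₀ habs
  have hexp1 : ∀ x : ℝ, 0 ≤ x → ‖Complex.exp (-(w*x))‖ ≤ 1 := by
    intro x hx
    rw [Complex.norm_exp]
    rw [Real.exp_le_one_iff]
    simp only [Complex.neg_re, Complex.mul_re, Complex.ofReal_re, Complex.ofReal_im,
      mul_zero, sub_zero]
    nlinarith
  -- derivatives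
  have huderiv : ∀ x ∈ Set.uIcc a 1, HasDerivAt (fun y : ℝ => ((y⁻¹:ℝ):ℂ))
      (((-(x^2)⁻¹:ℝ)):ℂ) x := by
    intro x hx
    rw [Set.uIcc_of_le ha1] at hx
    exact (hasDerivAt_inv (ne_of_gt (lt_of_lt_of_le ha0 hx.1))).ofReal_comp
  have hvderiv : ∀ x ∈ Set.uIcc a 1, HasDerivAt (fun y : ℝ => (-w)⁻¹ * Complex.exp (-(w*y)))
      (Complex.exp (-(w*x))) x := by
    intro x _
    have hid : HasDerivAt (fun y : ℝ => (y:ℂ)) 1 x := by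
      exact (hasDerivAt_id x).ofReal_comp
    have h1 : HasDerivAt (fun y : ℝ => -(w * (y:ℂ))) (-w) x := by
      have := (hid.const_mul w).neg; simp only [mul_one] at this; exact this
    have h2 := h1.cexp
    have h3 := h2.const_mul (-w)⁻¹
    have heq : -((-w)⁻¹ * (Complex.exp (-(w * (x:ℂ))) * w)) = Complex.exp (-(w*x)) := by
      field_simp
    have h4 : w⁻¹ * (Complex.exp (-(w * (x:ℂ))) * w) = Complex.exp (-(w*x)) := by
      field_simp
    simpa [heq, h4] using h3
  have hnot : (0:ℝ) ∉ Set.uIcc a 1 := by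
    rw [Set.uIcc_of_le ha1]
    intro h0
    exact absurd ((Set.mem_Icc.1 h0).1) (not_le.2 ha0)
  have hu'int : IntervalIntegrable (fun x : ℝ => (((-(x^2)⁻¹:ℝ)):ℂ)) volume a 1 := by
    apply ContinuousOn.intervalIntegrable
    apply Complex.continuous_ofReal.comp_continuousOn
    apply ContinuousOn.neg
    apply ContinuousOn.inv₀ (by fun_prop)
    intro x hx
    have : x ≠ 0 := fun h => hnot (h ▸ hx)
    positivity
  have hv'int : IntervalIntegrable (fun x : ℝ => Complex.exp (-(w*x))) volume a 1 := by
    apply Continuous.intervalIntegrable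
    fun_prop
  have ibp := intervalIntegral.integral_mul_deriv_eq_deriv_mul huderiv hvderiv hu'int hv'int
  have hcomm : (∫ x in a..1, Complex.exp (-(w*x)) * ((x⁻¹:ℝ):ℂ))
      = ∫ x in a..1, ((x⁻¹:ℝ):ℂ) * Complex.exp (-(w*x)) := by
    congr 1; ext x; ring
  rw [hcomm, ibp]
  have habs_term : ∀ x : ℝ, 0 ≤ x →
      ‖((x⁻¹:ℝ):ℂ) * ((-w)⁻¹ * Complex.exp (-(w*x)))‖ ≤ |x|⁻¹ * (‖w‖)⁻¹ := by
    intro x hx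
    rw [norm_mul, norm_mul, norm_inv, norm_neg, Complex.norm_real, Real.norm_eq_abs, abs_inv]
    apply mul_le_mul_of_nonneg_left ?_ (by positivity)
    exact mul_le_of_le_one_right (by positivity) (hexp1 x hx)
  have hT1 : ‖(((1:ℝ)⁻¹:ℝ):ℂ) * ((-w)⁻¹ * Complex.exp (-(w*(1:ℝ))))‖ ≤ 1 := by
    refine (habs_term 1 zero_le_one).trans ?_
    rw [abs_one, inv_one, one_mul]
    exact inv_le_one_of_one_le₀ habs
  have hT2 : ‖((a⁻¹:ℝ):ℂ) * ((-w)⁻¹ * Complex.exp (-(w*(a:ℝ))))‖ ≤ 1 := by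
    refine (habs_term a ha0.le).trans ?_
    rw [abs_of_pos ha0, ha_def, inv_inv]
    rw [mul_inv_cancel₀ hw0.ne']
  have hT3 : ‖∫ x in a..1, (((-(x^2)⁻¹:ℝ)):ℂ) * ((-w)⁻¹ * Complex.exp (-(w*x)))‖ ≤ 1 := by
    have hbd := intervalIntegral.norm_integral_le_of_norm_le
      (g := fun x : ℝ => (x^2)⁻¹ * (‖w‖)⁻¹)
      (f := fun x : ℝ => (((-(x^2)⁻¹:ℝ)):ℂ) * ((-w)⁻¹ * Complex.exp (-(w*x))))
      (μ := volume) (a := a) (b := 1) ha1 ?_ ?_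
    · refine hbd.trans ?_
      have hzp : (∫ x in a..1, (x^2)⁻¹ * (‖w‖)⁻¹)
          = (a⁻¹ - 1) * (‖w‖)⁻¹ := by
        rw [intervalIntegral.integral_mul_const]
        have : ∀ x : ℝ, (x^2)⁻¹ = x^(-2:ℤ) := by
          intro x; rw [zpow_neg]; norm_cast
        simp_rw [this]
        rw [integral_zpow (Or.inr ⟨by norm_num, hnot⟩)]
        have ha' : a ≠ 0 := ha0.ne'
        rw [show ((-2:ℤ)+1) = -1 by norm_num]
        rw [zpow_neg_one, zpow_neg_one, inv_one]
        ring
      rw [hzp]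
      have h1a : 1 ≤ a⁻¹ := by rw [ha_def, inv_inv]; exact habs
      have : (a⁻¹ - 1) * (‖w‖)⁻¹ = 1 - (‖w‖)⁻¹ := by
        rw [ha_def, inv_inv]
        field_simp
      rw [this]
      have : (0:ℝ) ≤ (‖w‖)⁻¹ := by positivity
      linarith
    · refine Filter.Eventually.of_forall ?_
      intro x hx
      have hx0 : 0 < x := lt_trans ha0 hx.1
      rw [norm_mul, norm_mul, Complex.norm_real, Real.norm_eq_abs, norm_inv, norm_neg]
      rw [abs_neg, abs_of_nonneg (by positivity : (0:ℝ) ≤ (x^2)⁻¹)]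
      apply mul_le_mul_of_nonneg_left _ (by positivity)
      calc (‖w‖)⁻¹ * ‖Complex.exp (-(w*x))‖
          ≤ (‖w‖)⁻¹ * 1 := by
            apply mul_le_mul_of_nonneg_left (hexp1 x hx0.le) (by positivity)
        _ = (‖w‖)⁻¹ := mul_one _
    · apply ContinuousOn.intervalIntegrable
      apply ContinuousOn.mul _ continuousOn_const
      apply ContinuousOn.inv₀ (by fun_prop)
      intro x hx
      have : x ≠ 0 := fun h => hnot (h ▸ hx)
      positivity
  have hfin := add_le_add (le_trans (norm_sub_le _ _) (add_le_add hT1 hT2)) hT3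
  refine le_trans (norm_sub_le _ _) ?_
  linarith


/-- There exists an absolute constant `C > 0` such that for every complex `w` with
`Re w ≥ 0` and `|w| ≥ 1`, one has `|∑_{n=1}^∞ (−w)^n/(n!·n) + log |w|| ≤ C`. -/
theorem stmt_6 :
    ∃ C : ℝ, 0 < C ∧ ∀ w : ℂ, 0 ≤ w.re → 1 ≤ ‖w‖ →
      ‖((∑' n : ℕ, (-w) ^ (n + 1) / ((Nat.factorial (n + 1) : ℂ) * ((n : ℂ) + 1)))
          + (Real.log ‖w‖ : ℂ))‖ ≤ C := by
  refine ⟨6, by norm_num, fun w hre habs => ?_⟩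
  set a : ℝ := (‖w‖)⁻¹ with ha_def
  have hw0 : (0:ℝ) < ‖w‖ := lt_of_lt_of_le one_pos habs
  have hwne : w ≠ 0 := by simpa using hw0.ne'
  have ha0 : 0 < a := inv_pos.2 hw0
  have ha1 : a ≤ 1 := inv_le_one_of_one_le₀ habs
  have hnot : (0:ℝ) ∉ Set.uIcc a 1 := by
    rw [Set.uIcc_of_le ha1]
    intro h0
    exact absurd ((Set.mem_Icc.1 h0).1) (not_le.2 ha0)
  set h : ℝ → ℂ := fun x => (Complex.exp (-(w*x)) - 1) * ((x:ℂ))⁻¹ with hh_def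
  have hexp1 : ∀ x : ℝ, 0 ≤ x → ‖Complex.exp (-(w*x))‖ ≤ 1 := by
    intro x hx
    rw [Complex.norm_exp, Real.exp_le_one_iff]
    simp only [Complex.neg_re, Complex.mul_re, Complex.ofReal_re, Complex.ofReal_im,
      mul_zero, sub_zero]
    nlinarith
  -- step A : the tsum equals an integral
  have hA : (∑' n : ℕ, (-w) ^ (n + 1) / ((Nat.factorial (n + 1) : ℂ) * ((n : ℂ) + 1)))
      = ∫ x in Set.Ioc (0:ℝ) 1, h x := stepA w (hsum_lemma w)
  -- bound for h on (0, a]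
  have hbound : ∀ x ∈ Set.Ioc (0:ℝ) a, ‖h x‖ ≤ 2 * ‖w‖ := by
    intro x hx
    have hx0 : 0 < x := hx.1
    have hxa : x ≤ a := hx.2
    have habs_arg : ‖-(w * (x:ℂ))‖ ≤ 1 := by
      rw [norm_neg, norm_mul, Complex.norm_real, Real.norm_eq_abs, abs_of_pos hx0]
      calc ‖w‖ * x ≤ ‖w‖ * a :=
            mul_le_mul_of_nonneg_left hxa hw0.le
        _ = 1 := by rw [ha_def, mul_inv_cancel₀ hw0.ne']
    have h1 : ‖Complex.exp (-(w * (x:ℂ))) - 1‖ ≤ 2 * ‖-(w * (x:ℂ))‖ :=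
      Complex.norm_exp_sub_one_le habs_arg
    have h2 : ‖-(w * (x:ℂ))‖ = ‖w‖ * x := by
      rw [norm_neg, norm_mul, Complex.norm_real, Real.norm_eq_abs, abs_of_pos hx0]
    rw [hh_def]
    simp only [norm_mul, norm_inv, Complex.norm_real, Real.norm_eq_abs, abs_of_pos hx0]
    calc ‖Complex.exp (-(w * (x:ℂ))) - 1‖ * x⁻¹
        ≤ (2 * (‖w‖ * x)) * x⁻¹ := by
          apply mul_le_mul_of_nonneg_right _ (by positivity)
          rw [← h2]; exact h1
      _ = 2 * ‖w‖ := by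
          field_simp
  -- measurability of h
  have hmeas : AEStronglyMeasurable h (volume.restrict (Set.Ioc 0 a)) := by
    have hinv : Measurable (fun x : ℝ => ((x:ℂ))⁻¹) := Complex.measurable_ofReal.inv
    have : Measurable h := by
      apply Measurable.mul _ hinv
      apply Measurable.sub _ measurable_const
      exact Complex.continuous_exp.measurable.comp (by fun_prop)
    exact this.aestronglyMeasurable
  -- interval integrability of h on [0,a] and [a,1]
  have hI1 : IntervalIntegrable h volume 0 a := by
    rw [intervalIntegrable_iff_integrableOn_Ioc_of_le ha0.le]
    exact (integrable_const (2 * ‖w‖)).mono' hmeas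
      ((ae_restrict_iff' measurableSet_Ioc).2 (Filter.Eventually.of_forall hbound))
  have hcontinv : ContinuousOn (fun x : ℝ => ((x:ℂ))⁻¹) (Set.uIcc a 1) := by
    apply ContinuousOn.inv₀ (Complex.continuous_ofReal.continuousOn)
    intro x hx hx0
    have : x = 0 := by exact_mod_cast hx0
    exact hnot (this ▸ hx)
  have hI2 : IntervalIntegrable h volume a 1 := by
    apply ContinuousOn.intervalIntegrable
    apply ContinuousOn.mul _ hcontinv
    exact (Continuous.sub (by fun_prop) continuous_const).continuousOn
  -- split the integral
  have hsplit : (∫ x in Set.Ioc (0:ℝ) 1, h x)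
      = (∫ x in (0:ℝ)..a, h x) + ∫ x in a..1, h x := by
    rw [← intervalIntegral.integral_of_le zero_le_one]
    exact (intervalIntegral.integral_add_adjacent_intervals hI1 hI2).symm
  -- piece 1 bound
  have hp1 : ‖∫ x in (0:ℝ)..a, h x‖ ≤ 2 := by
    have := intervalIntegral.norm_integral_le_of_norm_le_const (C := 2 * ‖w‖)
      (f := h) (a := 0) (b := a) ?_
    · refine this.trans ?_
      rw [sub_zero, abs_of_pos ha0, ha_def, mul_assoc, mul_inv_cancel₀ hw0.ne', mul_one]
    · intro x hx
      rw [Set.uIoc_of_le ha0.le] at hx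
      exact hbound x hx
  -- piece 2 : rewrite ∫ a..1 h
  have hlog : (∫ x in a..1, ((x⁻¹:ℝ):ℂ)) = ((Real.log (‖w‖) : ℝ) : ℂ) := by
    rw [intervalIntegral.integral_ofReal, integral_inv hnot]
    norm_num [ha_def]
  have hinteq : (∫ x in a..1, h x)
      = (∫ x in a..1, Complex.exp (-(w*x)) * ((x⁻¹:ℝ):ℂ)) - ((Real.log (‖w‖) : ℝ) : ℂ) := by
    have hcongr : (∫ x in a..1, h x)
        = ∫ x in a..1, (Complex.exp (-(w*x)) * ((x⁻¹:ℝ):ℂ) - ((x⁻¹:ℝ):ℂ)) := by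
      apply intervalIntegral.integral_congr
      intro x hx
      rw [hh_def]
      push_cast
      ring
    rw [hcongr, intervalIntegral.integral_sub, hlog]
    · apply ContinuousOn.intervalIntegrable
      apply ContinuousOn.mul ((by fun_prop : Continuous fun x : ℝ => Complex.exp (-(w*x))).continuousOn)
      simpa [Complex.ofReal_inv] using hcontinv
    · apply ContinuousOn.intervalIntegrable
      simpa [Complex.ofReal_inv] using hcontinv
  have hp2 := piece2 w hre habs
  -- assemble
  have hfinal : (∑' n : ℕ, (-w) ^ (n + 1) / ((Nat.factorial (n + 1) : ℂ) * ((n : ℂ) + 1)))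
      + (Real.log (‖w‖) : ℂ)
      = (∫ x in (0:ℝ)..a, h x) + ∫ x in a..1, Complex.exp (-(w*x)) * ((x⁻¹:ℝ):ℂ) := by
    rw [hA, hsplit, hinteq]
    ring
  rw [hfinal]
  calc ‖(∫ x in (0:ℝ)..a, h x) + ∫ x in a..1, Complex.exp (-(w*x)) * ((x⁻¹:ℝ):ℂ)‖
      ≤ ‖∫ x in (0:ℝ)..a, h x‖
        + ‖∫ x in a..1, Complex.exp (-(w*x)) * ((x⁻¹:ℝ):ℂ)‖ :=
        norm_add_le _ _
    _ ≤ 2 + 3 := add_le_add hp1 hp2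
    _ ≤ 6 := by norm_num
end

section
/- Let φ(s) = ξ(2s−1)/ξ(2s), where ξ is the completed Riemann zeta function. Then for every nonzero real number T, φ(1/2+iT) · φ′(1/2−iT) = −4·Re(ξ′(1+2iT)/ξ(1+2iT)), where φ′ denotes the complex derivative of φ (which is holomorphic in a neighbourhood of 1/2−iT) and the right-hand side is the real number −4·Re(ξ′(1+2iT)/ξ(1+2iT)) viewed as a complex number. -/
open Complex

section AuxConj
open Asymptotics Filter Topology

lemma hasDerivAt_conj_conj {f : ℂ → ℂ} {c z : ℂ} (hf : HasDerivAt f c ((starRingEnd ℂ) z)) :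
    HasDerivAt (fun s => (starRingEnd ℂ) (f ((starRingEnd ℂ) s))) ((starRingEnd ℂ) c) z := by
  rw [hasDerivAt_iff_isLittleO] at hf ⊢
  have hconj : Filter.Tendsto (starRingEnd ℂ) (𝓝 z) (𝓝 ((starRingEnd ℂ) z)) :=
    (Complex.continuous_conj).tendsto z
  have h := hf.comp_tendsto hconj
  have key : ∀ s : ℂ, (starRingEnd ℂ) (f ((starRingEnd ℂ) s)) - (starRingEnd ℂ) (f ((starRingEnd ℂ) z))
      - (s - z) • (starRingEnd ℂ) c
      = (starRingEnd ℂ) ((f ∘ starRingEnd ℂ) s - f ((starRingEnd ℂ) z)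
          - ((starRingEnd ℂ) s - (starRingEnd ℂ) z) • c) := by
    intro s
    simp only [smul_eq_mul, map_sub, map_mul, conj_conj, Function.comp_apply]
  simp only [key]
  rw [← isLittleO_norm_norm]
  have e1 : (fun s : ℂ => ‖(starRingEnd ℂ) ((f ∘ starRingEnd ℂ) s - f ((starRingEnd ℂ) z)
      - ((starRingEnd ℂ) s - (starRingEnd ℂ) z) • c)‖)
      = fun s : ℂ => ‖(f ∘ starRingEnd ℂ) s - f ((starRingEnd ℂ) z)
      - ((starRingEnd ℂ) s - (starRingEnd ℂ) z) • c‖ := by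
    funext s; exact RCLike.norm_conj _
  have e2 : (fun s : ℂ => ‖s - z‖) = fun s : ℂ => ‖(starRingEnd ℂ) s - (starRingEnd ℂ) z‖ := by
    funext s; rw [← map_sub, RCLike.norm_conj]
  rw [e1, e2]
  exact h.norm_norm

lemma completedRiemannZeta_conj_of_one_lt (s : ℂ) (hs : 1 < s.re) :
    completedRiemannZeta ((starRingEnd ℂ) s) = (starRingEnd ℂ) (completedRiemannZeta s) := by
  have hs' : 1 < ((starRingEnd ℂ) s).re := by simpa using hs
  rw [completedZeta_eq_tsum_of_one_lt_re hs, completedZeta_eq_tsum_of_one_lt_re hs']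
  have hπ : ((Real.pi : ℂ)).arg ≠ Real.pi := by
    rw [Complex.arg_ofReal_of_nonneg Real.pi_pos.le]
    exact Real.pi_ne_zero.symm
  have h1 : (Real.pi : ℂ) ^ (-(starRingEnd ℂ) s / 2) = (starRingEnd ℂ) ((Real.pi : ℂ) ^ (-s / 2)) := by
    have h : -(starRingEnd ℂ) s / 2 = (starRingEnd ℂ) (-s / 2) := by
      rw [map_div₀, map_neg, map_ofNat]
    rw [h, cpow_conj _ _ hπ, conj_ofReal]
  have h2 : Complex.Gamma ((starRingEnd ℂ) s / 2) = (starRingEnd ℂ) (Complex.Gamma (s / 2)) := by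
    have h : (starRingEnd ℂ) s / 2 = (starRingEnd ℂ) (s / 2) := by rw [map_div₀, map_ofNat]
    rw [h, Complex.Gamma_conj]
  have h3 : (∑' n : ℕ, 1 / (n : ℂ) ^ ((starRingEnd ℂ) s))
      = (starRingEnd ℂ) (∑' n : ℕ, 1 / (n : ℂ) ^ s) := by
    rw [conj_tsum]
    congr 1; funext n
    have hn : ((n : ℂ)).arg ≠ Real.pi := by
      rw [show ((n : ℂ)) = ((n : ℝ) : ℂ) by simp, Complex.arg_ofReal_of_nonneg (Nat.cast_nonneg n)]
      exact Real.pi_ne_zero.symm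
    rw [map_div₀, map_one, cpow_conj _ _ hn, Complex.conj_natCast]
  rw [h1, h2, h3, map_mul, map_mul]

lemma completedRiemannZeta₀_conj (s : ℂ) :
    completedRiemannZeta₀ ((starRingEnd ℂ) s) = (starRingEnd ℂ) (completedRiemannZeta₀ s) := by
  have hdiff : Differentiable ℂ (fun w => (starRingEnd ℂ)
      (completedRiemannZeta₀ ((starRingEnd ℂ) w))) := fun z =>
    (hasDerivAt_conj_conj ((differentiable_completedZeta₀ _).hasDerivAt)).differentiableAt
  have hfun : (fun w => (starRingEnd ℂ) (completedRiemannZeta₀ ((starRingEnd ℂ) w)))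
      = completedRiemannZeta₀ := by
    apply AnalyticOnNhd.eq_of_eventuallyEq (z₀ := (2 : ℂ))
      (analyticOnNhd_univ_iff_differentiable.mpr hdiff)
      (analyticOnNhd_univ_iff_differentiable.mpr differentiable_completedZeta₀)
    have hopen : IsOpen {w : ℂ | 1 < w.re} := isOpen_lt continuous_const continuous_re
    filter_upwards [hopen.mem_nhds (by norm_num)] with w hw
    have e3 := completedRiemannZeta_conj_of_one_lt w hw
    rw [completedRiemannZeta_eq, completedRiemannZeta_eq] at e3
    have expand : (starRingEnd ℂ) (completedRiemannZeta₀ w - 1 / w - 1 / (1 - w))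
        = (starRingEnd ℂ) (completedRiemannZeta₀ w) - 1 / (starRingEnd ℂ) w
          - 1 / (1 - (starRingEnd ℂ) w) := by
      rw [map_sub, map_sub, map_div₀, map_div₀, map_one, map_sub, map_one]
    rw [expand] at e3
    have e4 : completedRiemannZeta₀ ((starRingEnd ℂ) w)
        = (starRingEnd ℂ) (completedRiemannZeta₀ w) := by linear_combination e3
    show (starRingEnd ℂ) (completedRiemannZeta₀ ((starRingEnd ℂ) w)) = completedRiemannZeta₀ w
    rw [e4, conj_conj]
  have := congrFun hfun ((starRingEnd ℂ) s)
  simp only [conj_conj] at this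
  exact this.symm

lemma completedRiemannZeta_conj (s : ℂ) :
    completedRiemannZeta ((starRingEnd ℂ) s) = (starRingEnd ℂ) (completedRiemannZeta s) := by
  rw [completedRiemannZeta_eq, completedRiemannZeta_eq, completedRiemannZeta₀_conj,
    map_sub, map_sub, map_div₀, map_div₀, map_one, map_sub, map_one]

end AuxConj

/-- The scattering function `φ(s) = ξ(2s−1)/ξ(2s)` built from the completed Riemann zeta
function. -/
noncomputable def scatteringPhi (s : ℂ) : ℂ :=
  completedRiemannZeta (2 * s - 1) / completedRiemannZeta (2 * s)

section AuxDeriv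

lemma deriv_completedRiemannZeta_one_sub {z : ℂ} (h0 : z ≠ 0) (h1 : z ≠ 1) :
    deriv completedRiemannZeta (1 - z) = - deriv completedRiemannZeta z := by
  have hd : DifferentiableAt ℂ completedRiemannZeta (1 - z) :=
    differentiableAt_completedZeta (fun h => h1 (by linear_combination -h))
      (fun h => h0 (by linear_combination -h))
  have hinner : HasDerivAt (fun w : ℂ => 1 - w) (-1) z := by
    simpa using (hasDerivAt_id z).const_sub 1
  have hcomp := hd.hasDerivAt.comp z hinner
  have hfun : (fun w => completedRiemannZeta (1 - w)) = completedRiemannZeta :=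
    funext completedRiemannZeta_one_sub
  rw [show completedRiemannZeta ∘ (fun w : ℂ => 1 - w)
      = fun w => completedRiemannZeta (1 - w) from rfl, hfun] at hcomp
  rw [show deriv completedRiemannZeta z = deriv completedRiemannZeta (1 - z) * -1
      from hcomp.deriv]
  ring

lemma deriv_completedRiemannZeta_conj {z : ℂ} (h0 : z ≠ 0) (h1 : z ≠ 1) :
    deriv completedRiemannZeta ((starRingEnd ℂ) z)
      = (starRingEnd ℂ) (deriv completedRiemannZeta z) := by
  have hd : HasDerivAt completedRiemannZeta (deriv completedRiemannZeta z) z :=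
    (differentiableAt_completedZeta h0 h1).hasDerivAt
  have hd' : HasDerivAt completedRiemannZeta (deriv completedRiemannZeta z)
      ((starRingEnd ℂ) ((starRingEnd ℂ) z)) := by rwa [conj_conj]
  have h := hasDerivAt_conj_conj hd'
  have hfun : (fun s => (starRingEnd ℂ) (completedRiemannZeta ((starRingEnd ℂ) s)))
      = completedRiemannZeta := by
    funext s; rw [completedRiemannZeta_conj, conj_conj]
  rw [hfun] at h
  exact h.deriv


end AuxDeriv

/-- For every nonzero real `T`,
`φ(1/2+iT) · φ′(1/2−iT) = −4·Re(ξ′(1+2iT)/ξ(1+2iT))`, the right-hand side being a real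
number viewed as a complex number. -/
theorem stmt_10 (T : ℝ) (hT : T ≠ 0) :
    scatteringPhi (1 / 2 + Complex.I * T) * deriv scatteringPhi (1 / 2 - Complex.I * T)
      = ((-4 * (deriv completedRiemannZeta (1 + 2 * T * Complex.I)
            / completedRiemannZeta (1 + 2 * T * Complex.I)).re : ℝ) : ℂ) := by
  have ht : (T : ℂ) ≠ 0 := ofReal_ne_zero.mpr hT
  set t : ℂ := (T : ℂ) with ht_def
  -- basic nonvanishing of points
  have h2t0 : 2 * t * I ≠ 0 := by simp [ht, I_ne_zero]
  have h2t1 : 2 * t * I ≠ 1 := by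
    intro h
    have := congrArg Complex.re h
    simp [mul_re, mul_im, I_re, I_im, ht_def] at this
  have hm2t0 : -(2 * t * I) ≠ 0 := neg_ne_zero.mpr h2t0
  have hm2t1 : -(2 * t * I) ≠ 1 := by
    intro h
    have := congrArg Complex.re h
    simp [mul_re, mul_im, I_re, I_im, ht_def] at this
  have ha0 : 1 + 2 * t * I ≠ 0 := by
    intro h
    have := congrArg Complex.re h
    simp [mul_re, mul_im, I_re, I_im, ht_def] at this
  have ha1 : 1 + 2 * t * I ≠ 1 := by
    intro h
    have := congrArg Complex.im h
    simp [mul_re, mul_im, I_re, I_im, ht_def, hT] at this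
  have hb0 : 1 - 2 * t * I ≠ 0 := by
    intro h
    have := congrArg Complex.re h
    simp [mul_re, mul_im, I_re, I_im, ht_def] at this
  have hb1 : 1 - 2 * t * I ≠ 1 := by
    intro h
    have := congrArg Complex.im h
    simp [mul_re, mul_im, I_re, I_im, ht_def, hT] at this
  -- nonvanishing of ξ
  have hXiA : completedRiemannZeta (1 + 2 * t * I) ≠ 0 := by
    intro h
    have hz := riemannZeta_ne_zero_of_one_le_re (s := 1 + 2 * t * I) (by simp [ht_def])
    rw [riemannZeta_def_of_ne_zero ha0, h, zero_div] at hz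
    exact hz rfl
  have hXiB : completedRiemannZeta (1 - 2 * t * I) ≠ 0 := by
    intro h
    have hz := riemannZeta_ne_zero_of_one_le_re (s := 1 - 2 * t * I) (by simp [ht_def])
    rw [riemannZeta_def_of_ne_zero hb0, h, zero_div] at hz
    exact hz rfl
  -- conjugation relation of the two points
  have hconjpt : (starRingEnd ℂ) (1 + 2 * t * I) = 1 - 2 * t * I := by
    simp [ht_def, map_add, map_mul, map_ofNat, conj_I, conj_ofReal]
    ring
  -- abbreviations
  set A := completedRiemannZeta (1 + 2 * t * I) with hA_def
  set A' := deriv completedRiemannZeta (1 + 2 * t * I) with hA'_def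
  -- values via functional equation and conjugation
  have vB : completedRiemannZeta (2 * t * I) = completedRiemannZeta (1 - 2 * t * I) := by
    conv_lhs => rw [show 2 * t * I = 1 - (1 - 2 * t * I) by ring]
    exact completedRiemannZeta_one_sub _
  have vA : completedRiemannZeta (-(2 * t * I)) = A := by
    conv_lhs => rw [show -(2 * t * I) = 1 - (1 + 2 * t * I) by ring]
    exact completedRiemannZeta_one_sub _
  have vBconj : completedRiemannZeta (1 - 2 * t * I) = (starRingEnd ℂ) A := by
    rw [← hconjpt, completedRiemannZeta_conj]
  have dA : deriv completedRiemannZeta (-(2 * t * I)) = -A' := by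
    rw [show -(2 * t * I) = 1 - (1 + 2 * t * I) by ring,
      deriv_completedRiemannZeta_one_sub ha0 ha1]
  have dB : deriv completedRiemannZeta (1 - 2 * t * I) = (starRingEnd ℂ) A' := by
    rw [← hconjpt, deriv_completedRiemannZeta_conj ha0 ha1]
  -- derivative of scatteringPhi at 1/2 - I t
  set s₀ : ℂ := 1 / 2 - Complex.I * t with hs₀
  have e1 : 2 * s₀ - 1 = -(2 * t * I) := by rw [hs₀]; ring
  have e2 : 2 * s₀ = 1 - 2 * t * I := by rw [hs₀]; ring
  have hinner1 : HasDerivAt (fun s : ℂ => 2 * s - 1) 2 s₀ := by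
    simpa using ((hasDerivAt_id s₀).const_mul 2).sub_const 1
  have hinner2 : HasDerivAt (fun s : ℂ => 2 * s) 2 s₀ := by
    simpa using (hasDerivAt_id s₀).const_mul 2
  have houter1 : HasDerivAt completedRiemannZeta (-A') (2 * s₀ - 1) := by
    rw [e1, ← dA]
    exact (differentiableAt_completedZeta hm2t0 hm2t1).hasDerivAt
  have houter2 : HasDerivAt completedRiemannZeta ((starRingEnd ℂ) A') (2 * s₀) := by
    rw [e2, ← dB]
    exact (differentiableAt_completedZeta hb0 hb1).hasDerivAt
  have hnum : HasDerivAt (fun s : ℂ => completedRiemannZeta (2 * s - 1)) (-A' * 2) s₀ :=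
    houter1.comp s₀ hinner1
  have hden : HasDerivAt (fun s : ℂ => completedRiemannZeta (2 * s)) ((starRingEnd ℂ) A' * 2) s₀ :=
    houter2.comp s₀ hinner2
  have hdenne : completedRiemannZeta (2 * s₀) ≠ 0 := by rw [e2]; exact hXiB
  have hphi : HasDerivAt scatteringPhi
      ((-A' * 2 * completedRiemannZeta (2 * s₀)
        - completedRiemannZeta (2 * s₀ - 1) * ((starRingEnd ℂ) A' * 2))
        / completedRiemannZeta (2 * s₀) ^ 2) s₀ := hnum.div hden hdenne
  have hderiv := hphi.deriv
  -- value of scatteringPhi at 1/2 + I t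
  have f1 : 2 * (1 / 2 + Complex.I * t) - 1 = 2 * t * I := by ring
  have f2 : 2 * (1 / 2 + Complex.I * t) = 1 + 2 * t * I := by ring
  have hval : scatteringPhi (1 / 2 + Complex.I * t)
      = (starRingEnd ℂ) A / A := by
    rw [scatteringPhi, f1, f2, vB, vBconj]
  -- assemble
  rw [hval, hderiv, e1, e2, vA, vBconj]
  have hre : ((A' / A).re : ℂ) = (A' / A + (starRingEnd ℂ) A' / (starRingEnd ℂ) A) / 2 := by
    rw [← map_div₀]
    have := Complex.add_conj (A' / A)
    push_cast at this ⊢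
    linear_combination -this / 2
  push_cast
  rw [hre]
  have hconjA : (starRingEnd ℂ) A ≠ 0 := by
    rwa [ne_eq, map_eq_zero]
  field_simp
  ring
end

section
/- There exists an absolute constant C > 0 such that for all real numbers X, Y with X ≥ Y ≥ 1, |∫_{−∞}^{∞} (e^{−((t−X)/Y)²} + e^{−((t+X)/Y)²}) · tanh(πt) · t dt − 2√π · X·Y| ≤ C·Y². -/
open Real MeasureTheory

private lemma gauss_integrable (b c : ℝ) (hb : 0 < b) :
    Integrable (fun t : ℝ => Real.exp (-b * (t - c) ^ 2)) :=
  (integrable_exp_neg_mul_sq hb).comp_sub_right c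

private lemma gauss_integral (b c : ℝ) (hb : 0 < b) :
    ∫ t : ℝ, Real.exp (-b * (t - c) ^ 2) = Real.sqrt (Real.pi / b) := by
  rw [← integral_add_right_eq_self (fun t : ℝ => Real.exp (-b * (t - c) ^ 2)) c]
  simp only [add_sub_cancel_right]
  exact integral_gaussian b

private lemma gauss_mul_integrable (b c : ℝ) (hb : 0 < b) :
    Integrable (fun t : ℝ => Real.exp (-b * (t - c) ^ 2) * t) := by
  have h : Integrable (fun s : ℝ => Real.exp (-b * s ^ 2) * (s + c)) := by
    have h1 := integrable_mul_exp_neg_mul_sq hb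
    have h2 := (integrable_exp_neg_mul_sq hb).const_mul c
    refine (h1.add h2).congr (Filter.Eventually.of_forall fun s => ?_)
    simp only [Pi.add_apply]; ring
  have := h.comp_sub_right c
  simpa using this

private lemma odd_gauss (b : ℝ) : ∫ t : ℝ, Real.exp (-b * t ^ 2) * t = 0 := by
  have h := integral_neg_eq_self (fun t : ℝ => Real.exp (-b * t ^ 2) * t) volume
  simp only [neg_sq, mul_neg, integral_neg] at h
  linarith

private lemma gauss_mul_integral (b c : ℝ) (hb : 0 < b) :
    ∫ t : ℝ, Real.exp (-b * (t - c) ^ 2) * t = Real.sqrt (Real.pi / b) * c := by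
  rw [← integral_add_right_eq_self (fun t : ℝ => Real.exp (-b * (t - c) ^ 2) * t) c]
  simp only [add_sub_cancel_right]
  have h1 : Integrable (fun t : ℝ => Real.exp (-b * t ^ 2) * t) :=
    (integrable_mul_exp_neg_mul_sq hb).congr
      (Filter.Eventually.of_forall fun s => mul_comm _ _)
  have h2 : Integrable (fun t : ℝ => Real.exp (-b * t ^ 2) * c) :=
    (integrable_exp_neg_mul_sq hb).mul_const c
  have hsplit : (fun t : ℝ => Real.exp (-b * t ^ 2) * (t + c))
      = fun t : ℝ => Real.exp (-b * t ^ 2) * t + Real.exp (-b * t ^ 2) * c := by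
    funext t; ring
  rw [hsplit, integral_add h1 h2, odd_gauss b, integral_mul_const, integral_gaussian b]
  simp

private lemma abs_tanh_le_one (x : ℝ) : |Real.tanh x| ≤ 1 := by
  rw [Real.tanh_eq_sinh_div_cosh, abs_div, abs_of_pos (Real.cosh_pos x),
    div_le_one (Real.cosh_pos x), abs_le]
  have h1 := Real.exp_pos x
  have h2 := Real.exp_pos (-x)
  rw [Real.sinh_eq, Real.cosh_eq]
  constructor <;> nlinarith

private lemma one_sub_tanh_le (x : ℝ) : 1 - Real.tanh x ≤ 2 * Real.exp (-(2 * x)) := by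
  have hc := Real.cosh_pos x
  have h1 := Real.exp_pos x
  have h2 := Real.exp_pos (-x)
  have h3 : Real.exp x * Real.exp (-x) = 1 := by
    rw [← Real.exp_add]; simp
  have h4 : Real.exp (-(2 * x)) = Real.exp (-x) * Real.exp (-x) := by
    rw [← Real.exp_add]; ring_nf
  have h5 : 1 - Real.tanh x = Real.exp (-x) / Real.cosh x := by
    rw [Real.tanh_eq_sinh_div_cosh, eq_div_iff hc.ne', sub_mul,
      div_mul_cancel₀ _ hc.ne', Real.sinh_eq, Real.cosh_eq]
    ring
  rw [h5, div_le_iff₀ hc, Real.cosh_eq, h4]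
  nlinarith

private lemma abs_le_exp_half_sq (u : ℝ) : |u| ≤ Real.exp (u ^ 2 / 2) := by
  have h1 : u ^ 2 ≤ Real.exp (u ^ 2) := by
    have := Real.add_one_le_exp (u ^ 2)
    linarith
  have h2 : Real.exp (u ^ 2) = Real.exp (u ^ 2 / 2) * Real.exp (u ^ 2 / 2) := by
    rw [← Real.exp_add]; ring_nf
  nlinarith [Real.exp_pos (u ^ 2 / 2), abs_nonneg u, sq_abs u]

private lemma key_bound (X : ℝ) (hX : 0 ≤ X) (t : ℝ) :
    (1 - Real.tanh (Real.pi * t)) * |t| ≤ 1 + 2 * |t - X| := by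
  have htanh := abs_tanh_le_one (Real.pi * t)
  rw [abs_le] at htanh
  rcases le_or_gt 0 t with ht | ht
  · have h1 : 1 - Real.tanh (Real.pi * t) ≤ 2 * Real.exp (-(2 * (Real.pi * t))) :=
      one_sub_tanh_le _
    have h2 : 0 ≤ 1 - Real.tanh (Real.pi * t) := by linarith [htanh.2]
    have h3 : 2 * t ≤ Real.exp (2 * (Real.pi * t)) := by
      nlinarith [Real.add_one_le_exp (2 * (Real.pi * t)), Real.pi_gt_three]
    have h4 : 2 * Real.exp (-(2 * (Real.pi * t))) * t ≤ 1 := by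
      have he := Real.exp_pos (-(2 * (Real.pi * t)))
      have : Real.exp (-(2 * (Real.pi * t))) * Real.exp (2 * (Real.pi * t)) = 1 := by
        rw [← Real.exp_add]; simp
      nlinarith
    have : (1 - Real.tanh (Real.pi * t)) * |t| ≤ 2 * Real.exp (-(2 * (Real.pi * t))) * t := by
      rw [abs_of_nonneg ht]
      exact mul_le_mul_of_nonneg_right h1 ht
    nlinarith [abs_nonneg (t - X)]
  · have h1 : 1 - Real.tanh (Real.pi * t) ≤ 2 := by linarith [htanh.1]
    have h2 : |t| = -t := abs_of_neg ht
    have h3 : |t - X| = X - t := by rw [abs_of_nonpos (by linarith)]; ring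
    have h4 : 0 ≤ 1 - Real.tanh (Real.pi * t) := by linarith [htanh.2]
    nlinarith

set_option maxHeartbeats 1000000 in
/-- There exists an absolute constant `C > 0` such that for all real `X ≥ Y ≥ 1`,
`|∫_{−∞}^{∞} (e^{−((t−X)/Y)²} + e^{−((t+X)/Y)²}) tanh(πt) t dt − 2√π · XY| ≤ C·Y²`. -/
theorem stmt_17 :
    ∃ C : ℝ, 0 < C ∧ ∀ X Y : ℝ, 1 ≤ Y → Y ≤ X →
      |(∫ t : ℝ, (Real.exp (-((t - X) / Y) ^ 2) + Real.exp (-((t + X) / Y) ^ 2))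
            * Real.tanh (Real.pi * t) * t)
        - 2 * Real.sqrt Real.pi * X * Y| ≤ C * Y ^ 2 := by
  refine ⟨16, by norm_num, fun X Y hY hXY => ?_⟩
  have hY0 : (0 : ℝ) < Y := lt_of_lt_of_le one_pos hY
  have hX0 : (0 : ℝ) < X := lt_of_lt_of_le hY0 hXY
  set b1 : ℝ := (Y ^ 2)⁻¹ with hb1def
  set b2 : ℝ := (2 * Y ^ 2)⁻¹ with hb2def
  have hb1 : 0 < b1 := by positivity
  have hb2 : 0 < b2 := by positivity
  have hrw1 : ∀ t : ℝ, -((t - X) / Y) ^ 2 = -b1 * (t - X) ^ 2 := by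
    intro t; rw [hb1def, div_pow]; field_simp
  have hrw2 : ∀ t : ℝ, -((t + X) / Y) ^ 2 = -b1 * (t - (-X)) ^ 2 := by
    intro t; rw [hb1def, div_pow]; rw [sub_neg_eq_add]; field_simp
  simp only [hrw1, hrw2]
  -- notation
  set F : ℝ → ℝ := fun t =>
    (Real.exp (-b1 * (t - X) ^ 2) + Real.exp (-b1 * (t - (-X)) ^ 2))
      * Real.tanh (Real.pi * t) * t with hF
  set G : ℝ → ℝ := fun t =>
    Real.exp (-b1 * (t - X) ^ 2) * t - Real.exp (-b1 * (t - (-X)) ^ 2) * t with hGdef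
  set B : ℝ → ℝ := fun t =>
    (Real.exp (-b1 * (t - X) ^ 2) + 2 * Y * Real.exp (-b2 * (t - X) ^ 2))
      + (Real.exp (-b1 * (t - (-X)) ^ 2) + 2 * Y * Real.exp (-b2 * (t - (-X)) ^ 2)) with hBdef
  -- key pointwise inequality : exp(-b1 s²) |s| ≤ Y exp(-b2 s²)
  have hkey : ∀ s : ℝ, Real.exp (-b1 * s ^ 2) * |s| ≤ Y * Real.exp (-b2 * s ^ 2) := by
    intro s
    have h1 : |s| ≤ Y * Real.exp (b2 * s ^ 2) := by
      have h2 := abs_le_exp_half_sq (s / Y)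
      have h3 : |s| = Y * |s / Y| := by
        rw [abs_div, abs_of_pos hY0]; field_simp
      have h4 : (s / Y) ^ 2 / 2 = b2 * s ^ 2 := by
        rw [hb2def]
        field_simp
      rw [h3, ← h4]
      exact mul_le_mul_of_nonneg_left h2 hY0.le
    calc Real.exp (-b1 * s ^ 2) * |s|
        ≤ Real.exp (-b1 * s ^ 2) * (Y * Real.exp (b2 * s ^ 2)) :=
          mul_le_mul_of_nonneg_left h1 (Real.exp_pos _).le
      _ = Y * Real.exp (-b2 * s ^ 2) := by
          rw [mul_comm (Real.exp _) _, mul_assoc, ← Real.exp_add]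
          congr 2
          rw [hb1def, hb2def]; field_simp; ring
  -- integrability facts
  have hg1i := gauss_integrable b1 X hb1
  have hg2i := gauss_integrable b1 (-X) hb1
  have he1i := gauss_integrable b2 X hb2
  have he2i := gauss_integrable b2 (-X) hb2
  have hg1ti := gauss_mul_integrable b1 X hb1
  have hg2ti := gauss_mul_integrable b1 (-X) hb1
  have hGi : Integrable G := hg1ti.sub hg2ti
  have hBi : Integrable B :=
    (hg1i.add (he1i.const_mul (2 * Y))).add (hg2i.add (he2i.const_mul (2 * Y)))
  have htanh_cont : Continuous Real.tanh := by
    have : Real.tanh = fun x => Real.sinh x / Real.cosh x := by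
      funext x; exact Real.tanh_eq_sinh_div_cosh x
    rw [this]
    exact Real.continuous_sinh.div Real.continuous_cosh fun x => (Real.cosh_pos x).ne'
  have hFcont : Continuous F := by
    apply Continuous.mul
    apply Continuous.mul
    · exact (Real.continuous_exp.comp (by continuity)).add
        (Real.continuous_exp.comp (by continuity))
    · exact htanh_cont.comp (continuous_const.mul continuous_id)
    · exact continuous_id
  have hFi : Integrable F := by
    set D : ℝ → ℝ := fun t =>
      (Y * Real.exp (-b2 * (t - X) ^ 2) + X * Real.exp (-b1 * (t - X) ^ 2))
        + (Y * Real.exp (-b2 * (t - (-X)) ^ 2) + X * Real.exp (-b1 * (t - (-X)) ^ 2)) with hDdef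
    have hDi : Integrable D :=
      ((he1i.const_mul Y).add (hg1i.const_mul X)).add
        ((he2i.const_mul Y).add (hg2i.const_mul X))
    refine Integrable.mono' hDi hFcont.aestronglyMeasurable
      (Filter.Eventually.of_forall fun t => ?_)
    have ht := abs_tanh_le_one (Real.pi * t)
    have hg1p := Real.exp_pos (-b1 * (t - X) ^ 2)
    have hg2p := Real.exp_pos (-b1 * (t - (-X)) ^ 2)
    have hbound1 : Real.exp (-b1 * (t - X) ^ 2) * |t|
        ≤ Y * Real.exp (-b2 * (t - X) ^ 2) + X * Real.exp (-b1 * (t - X) ^ 2) := by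
      have h1 : |t| ≤ |t - X| + X := by
        have h := abs_add_le (t - X) X
        rw [sub_add_cancel, abs_of_pos hX0] at h
        exact h
      have h2 := hkey (t - X)
      nlinarith
    have hbound2 : Real.exp (-b1 * (t - (-X)) ^ 2) * |t|
        ≤ Y * Real.exp (-b2 * (t - (-X)) ^ 2) + X * Real.exp (-b1 * (t - (-X)) ^ 2) := by
      have h1 : |t| ≤ |t - (-X)| + X := by
        have h := abs_add_le (t - (-X)) (-X)
        rw [sub_add_cancel, abs_neg, abs_of_pos hX0] at h
        exact h
      have h2 := hkey (t - (-X))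
      nlinarith
    rw [Real.norm_eq_abs, hF]
    simp only
    rw [abs_mul, abs_mul, abs_of_pos (by positivity : (0:ℝ) <
      Real.exp (-b1 * (t - X) ^ 2) + Real.exp (-b1 * (t - (-X)) ^ 2))]
    calc (Real.exp (-b1 * (t - X) ^ 2) + Real.exp (-b1 * (t - (-X)) ^ 2))
          * |Real.tanh (Real.pi * t)| * |t|
        ≤ (Real.exp (-b1 * (t - X) ^ 2) + Real.exp (-b1 * (t - (-X)) ^ 2)) * 1 * |t| :=
          mul_le_mul_of_nonneg_right
            (mul_le_mul_of_nonneg_left ht (by positivity)) (abs_nonneg t)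
      _ = Real.exp (-b1 * (t - X) ^ 2) * |t| + Real.exp (-b1 * (t - (-X)) ^ 2) * |t| := by ring
      _ ≤ D t := by simp only [hDdef]; linarith
  -- value of ∫ G
  have hsqrt1 : Real.sqrt (Real.pi / b1) = Real.sqrt Real.pi * Y := by
    have h : Real.pi / b1 = Real.pi * Y ^ 2 := by rw [hb1def]; field_simp
    rw [h, Real.sqrt_mul Real.pi_nonneg, Real.sqrt_sq hY0.le]
  have hGval : ∫ t, G t = 2 * Real.sqrt Real.pi * X * Y := by
    simp only [hGdef]
    rw [integral_sub hg1ti hg2ti, gauss_mul_integral b1 X hb1, gauss_mul_integral b1 (-X) hb1,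
      hsqrt1]
    ring
  -- pointwise error bound
  have herr : ∀ t : ℝ, |F t - G t| ≤ B t := by
    intro t
    have htanh := abs_tanh_le_one (Real.pi * t)
    rw [abs_le] at htanh
    have hg1p := (Real.exp_pos (-b1 * (t - X) ^ 2)).le
    have hg2p := (Real.exp_pos (-b1 * (t - (-X)) ^ 2)).le
    have hb1' : (1 - Real.tanh (Real.pi * t)) * |t| ≤ 1 + 2 * |t - X| :=
      key_bound X hX0.le t
    have hb2' : (1 + Real.tanh (Real.pi * t)) * |t| ≤ 1 + 2 * |t - (-X)| := by
      have h := key_bound X hX0.le (-t)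
      have e1 : Real.pi * (-t) = -(Real.pi * t) := by ring
      rw [e1, Real.tanh_neg, abs_neg] at h
      have e2 : |-t - X| = |t - (-X)| := by
        rw [show -t - X = -(t - (-X)) by ring, abs_neg]
      rw [e2] at h
      linarith
    have hident : F t - G t
        = Real.exp (-b1 * (t - X) ^ 2) * (t * (Real.tanh (Real.pi * t) - 1))
          + Real.exp (-b1 * (t - (-X)) ^ 2) * (t * (Real.tanh (Real.pi * t) + 1)) := by
      rw [hF, hGdef]; simp only; ring
    have habs1 : |Real.exp (-b1 * (t - X) ^ 2) * (t * (Real.tanh (Real.pi * t) - 1))|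
        = Real.exp (-b1 * (t - X) ^ 2) * ((1 - Real.tanh (Real.pi * t)) * |t|) := by
      rw [abs_mul, abs_mul, abs_of_nonneg hg1p,
        abs_of_nonpos (by linarith : Real.tanh (Real.pi * t) - 1 ≤ 0)]
      ring
    have habs2 : |Real.exp (-b1 * (t - (-X)) ^ 2) * (t * (Real.tanh (Real.pi * t) + 1))|
        = Real.exp (-b1 * (t - (-X)) ^ 2) * ((1 + Real.tanh (Real.pi * t)) * |t|) := by
      rw [abs_mul, abs_mul, abs_of_nonneg hg2p,
        abs_of_nonneg (by linarith : (0:ℝ) ≤ Real.tanh (Real.pi * t) + 1)]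
      ring
    calc |F t - G t|
        ≤ Real.exp (-b1 * (t - X) ^ 2) * ((1 - Real.tanh (Real.pi * t)) * |t|)
          + Real.exp (-b1 * (t - (-X)) ^ 2) * ((1 + Real.tanh (Real.pi * t)) * |t|) := by
          rw [hident, ← habs1, ← habs2]
          exact abs_add_le _ _
      _ ≤ Real.exp (-b1 * (t - X) ^ 2) * (1 + 2 * |t - X|)
          + Real.exp (-b1 * (t - (-X)) ^ 2) * (1 + 2 * |t - (-X)|) := by
          have k1 := mul_le_mul_of_nonneg_left hb1' hg1p
          have k2 := mul_le_mul_of_nonneg_left hb2' hg2p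
          linarith
      _ ≤ B t := by
          simp only [hBdef]
          have h1 := hkey (t - X)
          have h2 := hkey (t - (-X))
          nlinarith
  -- value bound for ∫ B
  have hsqrt2 : Real.sqrt (Real.pi / b2) = Real.sqrt (2 * Real.pi) * Y := by
    have h : Real.pi / b2 = 2 * Real.pi * Y ^ 2 := by rw [hb2def]; field_simp
    rw [h, Real.sqrt_mul (by positivity), Real.sqrt_sq hY0.le]
  have hBval : ∫ t, B t
      = 2 * (Real.sqrt Real.pi * Y) + 4 * Y * (Real.sqrt (2 * Real.pi) * Y) := by
    have hsum1 : Integrable (fun t : ℝ => Real.exp (-b1 * (t - X) ^ 2)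
        + 2 * Y * Real.exp (-b2 * (t - X) ^ 2)) volume := hg1i.add (he1i.const_mul (2 * Y))
    have hsum2 : Integrable (fun t : ℝ => Real.exp (-b1 * (t - (-X)) ^ 2)
        + 2 * Y * Real.exp (-b2 * (t - (-X)) ^ 2)) volume := hg2i.add (he2i.const_mul (2 * Y))
    have hc1 : Integrable (fun t : ℝ => 2 * Y * Real.exp (-b2 * (t - X) ^ 2)) volume :=
      he1i.const_mul (2 * Y)
    have hc2 : Integrable (fun t : ℝ => 2 * Y * Real.exp (-b2 * (t - (-X)) ^ 2)) volume :=
      he2i.const_mul (2 * Y)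
    simp only [hBdef]
    rw [integral_add hsum1 hsum2,
      integral_add hg1i hc1, integral_add hg2i hc2,
      integral_const_mul, integral_const_mul, gauss_integral b1 X hb1,
      gauss_integral b1 (-X) hb1, gauss_integral b2 X hb2, gauss_integral b2 (-X) hb2,
      hsqrt1, hsqrt2]
    ring
  -- conclude
  have hsub : Integrable (fun t => F t - G t) := hFi.sub hGi
  have step1 : |(∫ t, F t) - 2 * Real.sqrt Real.pi * X * Y| = |∫ t, (F t - G t)| := by
    rw [integral_sub hFi hGi, hGval]
  have step2 : |∫ t, (F t - G t)| ≤ ∫ t, |F t - G t| := by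
    simpa [Real.norm_eq_abs] using norm_integral_le_integral_norm (fun t => F t - G t)
  have step3 : ∫ t, |F t - G t| ≤ ∫ t, B t :=
    integral_mono hsub.abs hBi herr
  have hpi2 : Real.sqrt Real.pi ≤ 2 := by
    rw [show (2:ℝ) = Real.sqrt 4 by
      rw [show (4:ℝ) = 2 ^ 2 by norm_num, Real.sqrt_sq (by norm_num : (0:ℝ) ≤ 2)]]
    exact Real.sqrt_le_sqrt (by linarith [Real.pi_le_four])
  have h2pi3 : Real.sqrt (2 * Real.pi) ≤ 3 := by
    rw [show (3:ℝ) = Real.sqrt 9 by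
      rw [show (9:ℝ) = 3 ^ 2 by norm_num, Real.sqrt_sq (by norm_num : (0:ℝ) ≤ 3)]]
    exact Real.sqrt_le_sqrt (by linarith [Real.pi_le_four])
  have hfinal : ∫ t, B t ≤ 16 * Y ^ 2 := by
    rw [hBval]
    have hYY : Y ≤ Y ^ 2 := by nlinarith
    have hs1 : 0 ≤ Real.sqrt Real.pi := Real.sqrt_nonneg _
    have hs2 : 0 ≤ Real.sqrt (2 * Real.pi) := Real.sqrt_nonneg _
    nlinarith
  calc |(∫ t, F t) - 2 * Real.sqrt Real.pi * X * Y|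
      = |∫ t, (F t - G t)| := step1
    _ ≤ ∫ t, |F t - G t| := step2
    _ ≤ ∫ t, B t := step3
    _ ≤ 16 * Y ^ 2 := hfinal
end
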